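/- arXiv:1411.4692 — 16 statements merged into one kernel-verified Lean document; each statement's English description precedes it below -/
import Mathlib

section
/- For every prime p and every positive integer k, there exists a collection of p^k matrices A_1, A_2, ..., A_{p^k}, each a k×k matrix over the finite field F_p, such that for every pair of distinct indices 1 ≤ i ≠ j ≤ p^k and every nonempty subset I ⊆ [k], the partial column sums differ: Σ_{ℓ∈I} A_i^{(ℓ)} ≠ Σ_{ℓ∈I} A_j^{(ℓ)}. -/
open Polynomial IntermediateField

/-- For every prime `p` and positive integer `k`, there exist `p^k`
matrices `A_1, ..., A_{p^k}` in `F_p^{k×k}` such that for all `i ≠ j` and every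
nonempty `I ⊆ [k]`, `∑_{ℓ∈I} A_i^{(ℓ)} ≠ ∑_{ℓ∈I} A_j^{(ℓ)}`. -/
theorem stmt_0 (p k : ℕ) (hp : p.Prime) (hk : 1 ≤ k) :
    ∃ A : Fin (p ^ k) → Matrix (Fin k) (Fin k) (ZMod p),
      ∀ i j : Fin (p ^ k), i ≠ j →
        ∀ I : Finset (Fin k), I.Nonempty →
          (∑ ℓ ∈ I, fun r => A i r ℓ) ≠ (∑ ℓ ∈ I, fun r => A j r ℓ) := by
  haveI : Fact p.Prime := ⟨hp⟩
  set F := GaloisField p k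
  have hk0 : k ≠ 0 := by omega
  have hcard : Nat.card F = p ^ k := GaloisField.card p k hk0
  haveI : Finite F := Nat.finite_of_card_ne_zero (by rw [hcard]; exact pow_ne_zero _ hp.pos.ne')
  -- primitive element
  obtain ⟨α, hα⟩ := Field.exists_primitive_element_of_finite_top (ZMod p) F
  have hint : IsIntegral (ZMod p) α := IsIntegral.of_finite _ _
  have hdeg : (minpoly (ZMod p) α).natDegree = k := by
    have h1 : Module.finrank (ZMod p) (ZMod p)⟮α⟯ = (minpoly (ZMod p) α).natDegree :=
      IntermediateField.adjoin.finrank hint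
    rw [hα, finrank_top'] at h1
    rw [← h1, GaloisField.finrank p hk0]
  have hli : LinearIndependent (ZMod p) fun i : Fin k => α ^ (i : ℕ) := by
    have := linearIndependent_pow (K := ZMod p) (S := F) α
    rwa [hdeg] at this
  -- subset sums nonzero
  have hs : ∀ I : Finset (Fin k), I.Nonempty → (∑ ℓ ∈ I, α ^ (ℓ : ℕ)) ≠ 0 := by
    intro I hI h0
    obtain ⟨i, hi⟩ := hI
    have := Fintype.linearIndependent_iff.1 hli
      (fun ℓ => if ℓ ∈ I then 1 else 0) ?_ i
    · simp [hi] at this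
    · simp only [ite_smul, one_smul, zero_smul, Finset.sum_ite_mem, Finset.univ_inter, h0]
  obtain ⟨e⟩ : Nonempty (Fin (p ^ k) ≃ F) := ⟨(Finite.equivFinOfCardEq hcard).symm⟩
  haveI : FiniteDimensional (ZMod p) F := Module.Finite.of_finite
  let B := (Module.finBasis (ZMod p) F).reindex (finCongr (GaloisField.finrank p hk0))
  let φ := B.equivFun
  refine ⟨fun i r ℓ => φ (e i * α ^ (ℓ : ℕ)) r, ?_⟩
  intro i j hij I hI h
  apply hij
  have key : ∀ x : F, (∑ ℓ ∈ I, fun r => φ (x * α ^ (ℓ : ℕ)) r)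
      = φ (x * ∑ ℓ ∈ I, α ^ (ℓ : ℕ)) := by
    intro x
    rw [Finset.mul_sum, map_sum]
  rw [key, key] at h
  have := mul_right_cancel₀ (hs I hI) (φ.injective h)
  exact e.injective this
end

section
/- For every prime p and every positive integer k, there exists a collection of p^k matrices B_1, B_2, ..., B_{p^k}, each a k×(k+1) matrix over the finite field F_p, such that: (1) for every 1 ≤ i ≤ p^k, the sum of the k+1 columns of B_i is the zero vector; and (2) for every pair of distinct indices 1 ≤ i ≠ j ≤ p^k and every nonempty proper subset I ⊊ [k+1], the sum Σ_{ℓ∈I} B_i^{(ℓ)} + Σ_{ℓ∈[k+1]∖I} B_j^{(ℓ)} is nonzero. -/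
/-!
Identify `F_p^k` with `F_{p^k}` through a basis. Choose `a_1, …, a_{k+1} ∈ F_{p^k}` summing to
zero whose nonempty proper subsums are all nonzero (a basis together with minus its sum), and
let `B_x` be the matrix with columns `a_ℓ x`, one for each `x ∈ F_{p^k}`. Its columns sum to
`(∑ a_ℓ) x = 0`, and for `x ≠ y` the mixed sum is `(∑_{ℓ ∈ I} a_ℓ)(x - y) ≠ 0`.
-/

open Finset

section ProperSubsetSums

variable {R M ι : Type*} [Ring R] [Nontrivial R] [AddCommGroup M] [Module R M]

theorem LinearIndepOn.sum_ne_zero {v : ι → M} {s : Set ι} (hv : LinearIndepOn R v s)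
    {I : Finset ι} (hIs : ↑I ⊆ s) (hI : I.Nonempty) : ∑ i ∈ I, v i ≠ 0 := by
  intro h
  obtain ⟨i, hi⟩ := hI
  exact one_ne_zero <|
    linearIndepOn_finset_iff.mp (hv.mono hIs) (fun _ => (1 : R)) (by simpa using h) i hi

theorem sum_ne_zero_of_linearIndepOn_compl_singleton [Fintype ι] [DecidableEq ι] {a : ι → M}
    {i₀ : ι} (ha : LinearIndepOn R a {i₀}ᶜ) (hsum : ∑ i, a i = 0) {I : Finset ι}
    (hI : I.Nonempty) (hIu : I ≠ univ) : ∑ i ∈ I, a i ≠ 0 := by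
  by_cases h₀ : i₀ ∈ I
  · have hIc : (Iᶜ).Nonempty := by
      rwa [nonempty_iff_ne_empty, Ne, compl_eq_empty_iff]
    have hc : ∑ i ∈ Iᶜ, a i ≠ 0 :=
      ha.sum_ne_zero (by simpa [Set.subset_compl_singleton_iff] using h₀) hIc
    rw [eq_neg_of_add_eq_zero_left ((sum_add_sum_compl I a).trans hsum)]
    exact neg_ne_zero.mpr hc
  · exact ha.sum_ne_zero (by simpa [Set.subset_compl_singleton_iff] using h₀) hI

theorem LinearIndependent.exists_sum_eq_zero_forall_sum_ne_zero {k : ℕ} {b : Fin k → M}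
    (hb : LinearIndependent R b) :
    ∃ a : Fin (k + 1) → M, ∑ ℓ, a ℓ = 0 ∧
      ∀ I : Finset (Fin (k + 1)), I.Nonempty → I ≠ univ → ∑ ℓ ∈ I, a ℓ ≠ 0 := by
  refine ⟨Fin.cons (-∑ i, b i) b, by simp [Fin.sum_cons], fun I hI hIu => ?_⟩
  refine sum_ne_zero_of_linearIndepOn_compl_singleton (R := R) (i₀ := 0) ?_
    (by simp [Fin.sum_cons]) hI hIu
  rwa [← Fin.range_succ, linearIndepOn_range_iff (Fin.succ_injective _), Fin.cons_comp_succ]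

end ProperSubsetSums

section MulColMatrix

variable {F L κ ι : Type*} [Semiring F] [Ring L] [Module F L] [Finite κ]

noncomputable def Module.Basis.mulColMatrix (b : Module.Basis κ F L) (a : ι → L) (x : L) :
    Matrix κ ι F :=
  Matrix.of fun r ℓ => b.equivFun (a ℓ * x) r

theorem Module.Basis.sum_mulColMatrix_col (b : Module.Basis κ F L) (a : ι → L) (x : L)
    (s : Finset ι) :
    ∑ ℓ ∈ s, (fun r => b.mulColMatrix a x r ℓ) = b.equivFun ((∑ ℓ ∈ s, a ℓ) * x) := by
  simp [mulColMatrix, sum_mul, map_sum]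

theorem Module.Basis.sum_mulColMatrix_col_eq_zero (b : Module.Basis κ F L) {a : ι → L}
    [Fintype ι] (ha : ∑ ℓ, a ℓ = 0) (x : L) :
    ∑ ℓ, (fun r => b.mulColMatrix a x r ℓ) = 0 := by
  rw [b.sum_mulColMatrix_col, ha, zero_mul, map_zero]

theorem Module.Basis.mixed_sum_mulColMatrix_col_ne_zero [NoZeroDivisors L]
    (b : Module.Basis κ F L) [Fintype ι] [DecidableEq ι] {a : ι → L} (ha : ∑ ℓ, a ℓ = 0)
    {I : Finset ι} (hI : ∑ ℓ ∈ I, a ℓ ≠ 0) {x y : L} (hxy : x ≠ y) :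
    ∑ ℓ ∈ I, (fun r => b.mulColMatrix a x r ℓ) + ∑ ℓ ∈ Iᶜ, (fun r => b.mulColMatrix a y r ℓ)
      ≠ 0 := by
  have hIc : ∑ ℓ ∈ Iᶜ, a ℓ = -∑ ℓ ∈ I, a ℓ :=
    eq_neg_of_add_eq_zero_right ((sum_add_sum_compl I a).trans ha)
  rw [b.sum_mulColMatrix_col, b.sum_mulColMatrix_col, hIc, ← map_add, neg_mul, ← sub_eq_add_neg,
    ← mul_sub, Ne, LinearEquiv.map_eq_zero_iff]
  exact mul_ne_zero hI (sub_ne_zero.mpr hxy)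

end MulColMatrix

/-- For every prime `p` and positive integer `k`, there exist `p^k`
matrices `B_1, ..., B_{p^k}` in `F_p^{k×(k+1)}` such that (1) each matrix has
columns summing to zero, and (2) for all `i ≠ j` and every nonempty proper
`I ⊊ [k+1]`, `∑_{ℓ∈I} B_i^{(ℓ)} + ∑_{ℓ∉I} B_j^{(ℓ)} ≠ 0`. -/
theorem stmt_1 (p k : ℕ) (hp : p.Prime) (hk : 1 ≤ k) :
    ∃ B : Fin (p ^ k) → Matrix (Fin k) (Fin (k + 1)) (ZMod p),
      (∀ i, (∑ ℓ : Fin (k + 1), fun r => B i r ℓ) = 0) ∧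
      (∀ i j : Fin (p ^ k), i ≠ j →
        ∀ I : Finset (Fin (k + 1)), I.Nonempty → I ≠ Finset.univ →
          (∑ ℓ ∈ I, fun r => B i r ℓ) + (∑ ℓ ∈ Iᶜ, fun r => B j r ℓ) ≠ 0) := by
  have : Fact p.Prime := ⟨hp⟩
  have hk₀ : k ≠ 0 := by omega
  let K := GaloisField p k
  let b := Module.finBasisOfFinrankEq (ZMod p) K (GaloisField.finrank p hk₀)
  let e : Fin (p ^ k) ≃ K := (Finite.equivFinOfCardEq (GaloisField.card p k hk₀)).symm
  obtain ⟨a, ha, hI⟩ := b.linearIndependent.exists_sum_eq_zero_forall_sum_ne_zero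
  exact ⟨fun i => b.mulColMatrix a (e i), fun i => b.sum_mulColMatrix_col_eq_zero ha _,
    fun i j hij I hne hIu => b.mixed_sum_mulColMatrix_col_ne_zero ha (hI I hne hIu)
      (e.injective.ne hij)⟩
end

section
/- Let k ≥ 3 be an integer, p a prime, and n ≥ 1 an integer. Suppose F is a collection of m vectors in Z_{p^{k-1}}^n such that for every k vectors v_1, ..., v_k ∈ F (repetitions allowed), if v_1, ..., v_k are not all equal, then there exists a coordinate i ∈ [n] for which the set of entries {(v_1)_i, ..., (v_k)_i} has exactly 2 distinct elements. Then there exists an (n(k-1), m) local PMF for k-cycles over F_p. -/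
/-!
Read the symbols of `Z_{p^{k-1}}` as elements of the field `K = 𝔽_{p^{k-1}}`, and identify
`K` with `𝔽_p^{k-1}` through a basis `b_1, …, b_{k-1}`. The vectors `e_j = b_j` (`j < k`) and
`e_k = -∑ b_i` sum to zero, while no proper nonempty subfamily does. Take the `i`-th tuple to be
`x_i^{(j)} = e_j · F_i` in `K^n`. If `∑_j x_{i_j}^{(j)} = 0` with the `i_j` not all equal, pick a
coordinate where the entries take exactly two values `w₁ ≠ w₂`: there the sum equals
`(∑_{j ∈ S} e_j) (w₁ - w₂) ≠ 0`, where `S` is the proper nonempty set of positions carrying `w₁`.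
-/

open Finset Module

def IsLocalPMF {ι κ M : Type*} [Fintype κ] [AddCommMonoid M] (x : ι → κ → M) : Prop :=
  (∀ i, ∑ j, x i j = 0) ∧ ∀ idx : κ → ι, ∑ j, x (idx j) j = 0 → ∀ a b, idx a = idx b

theorem IsLocalPMF.map {ι κ M N : Type*} [Fintype κ] [AddCommMonoid M] [AddCommMonoid N]
    {x : ι → κ → M} (hx : IsLocalPMF x) (f : M →+ N) (hf : Function.Injective f) :
    IsLocalPMF fun i j => f (x i j) := by
  refine ⟨fun i => by rw [← map_sum, hx.1, map_zero], fun idx hidx => hx.2 idx ?_⟩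
  rwa [← map_sum, map_eq_zero_iff f hf] at hidx

section SnocNegSum

variable {R V : Type*} [Ring R] [AddCommGroup V] [Module R V] {r : ℕ} (v : Fin r → V)

theorem Fin.sum_snoc_neg_sum : ∑ j, Fin.snoc (α := fun _ => V) v (-∑ i, v i) j = 0 := by
  simp [Fin.sum_univ_castSucc]

theorem LinearIndependent.eq_of_sum_smul_snoc_neg_sum_eq_zero (hv : LinearIndependent R v)
    {c : Fin (r + 1) → R} (hc : ∑ j, c j • Fin.snoc (α := fun _ => V) v (-∑ i, v i) j = 0)
    (j : Fin (r + 1)) : c j = c (Fin.last r) := by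
  have hrel : ∑ i, (c i.castSucc - c (Fin.last r)) • v i = 0 := by
    simpa [Fin.sum_univ_castSucc, sub_smul, smul_sum, ← sub_eq_add_neg] using hc
  induction j using Fin.lastCases with
  | last => rfl
  | cast i => exact sub_eq_zero.mp (Fintype.linearIndependent_iff.mp hv _ hrel i)

theorem LinearIndependent.sum_snoc_neg_sum_ne_zero [Nontrivial R] (hv : LinearIndependent R v)
    {S : Finset (Fin (r + 1))} (hS : S.Nonempty) (hS' : S ≠ univ) :
    ∑ j ∈ S, Fin.snoc (α := fun _ => V) v (-∑ i, v i) j ≠ 0 := by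
  intro hsum
  obtain ⟨j, hj⟩ := hS
  obtain ⟨j', hj'⟩ := by simpa [eq_univ_iff_forall] using hS'
  have hc := hv.eq_of_sum_smul_snoc_neg_sum_eq_zero v
    (c := fun j => if j ∈ S then 1 else 0) (by simpa [ite_smul, ← sum_filter] using hsum)
  have := (hc j).trans (hc j').symm
  simp [hj, hj'] at this

end SnocNegSum

theorem sum_mul_ne_zero_of_card_image_eq_two {R κ : Type*} [CommRing R] [NoZeroDivisors R]
    [DecidableEq R] [Fintype κ] {e : κ → R} (he : ∑ j, e j = 0)
    (he' : ∀ S : Finset κ, S.Nonempty → S ≠ univ → ∑ j ∈ S, e j ≠ 0)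
    {y : κ → R} (hy : #(univ.image y) = 2) : ∑ j, e j * y j ≠ 0 := by
  obtain ⟨w₁, w₂, hw, himg⟩ := card_eq_two.mp hy
  have hval : ∀ j, y j = w₁ ∨ y j = w₂ := fun j => by
    simpa [himg] using mem_image_of_mem y (mem_univ j)
  obtain ⟨j₁, -, hj₁⟩ := mem_image.mp (himg ▸ mem_insert_self w₁ {w₂})
  obtain ⟨j₂, -, hj₂⟩ := mem_image.mp (himg ▸ mem_insert_of_mem (mem_singleton_self w₂))
  set S := univ.filter (y · = w₁)
  have hS : S.Nonempty := ⟨j₁, by simp [S, hj₁]⟩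
  have hS' : S ≠ univ := fun h => hw <| Eq.symm <| by
    simpa [S, hj₂] using (h ▸ mem_univ j₂ : j₂ ∈ S)
  -- Subtracting `w₂ * ∑ e = 0` leaves only the terms with `y j = w₁`.
  have : ∑ j, e j * y j = (∑ j ∈ S, e j) * (w₁ - w₂) := calc
    ∑ j, e j * y j = ∑ j, e j * (y j - w₂) := by simp [mul_sub, sum_sub_distrib, ← sum_mul, he]
    _ = ∑ j ∈ S, e j * (w₁ - w₂) := by
      rw [sum_filter]
      refine sum_congr rfl fun j _ => ?_
      split_ifs with h
      · rw [h]
      · simp [(hval j).resolve_left h]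
    _ = (∑ j ∈ S, e j) * (w₁ - w₂) := (sum_mul ..).symm
  rw [this]
  exact mul_ne_zero (he' S hS hS') (sub_ne_zero.mpr hw)

theorem isLocalPMF_mul {R ι κ σ : Type*} [CommRing R] [NoZeroDivisors R] [DecidableEq R]
    [Fintype κ] {e : κ → R} (he : ∑ j, e j = 0)
    (he' : ∀ S : Finset κ, S.Nonempty → S ≠ univ → ∑ j ∈ S, e j ≠ 0) (y : ι → σ → R)
    (hy : ∀ idx : κ → ι, ¬ (∀ a b, idx a = idx b) →
      ∃ s, #(univ.image fun j => y (idx j) s) = 2) :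
    IsLocalPMF fun i j s => e j * y i s := by
  refine ⟨fun i => funext fun s => by simp [← sum_mul, he], fun idx hidx => ?_⟩
  by_contra hne
  obtain ⟨s, hs⟩ := hy idx hne
  exact sum_mul_ne_zero_of_card_image_eq_two he he' hs (by simpa using congrFun hidx s)

theorem exists_isLocalPMF_of_finrank_eq {k K ι : Type*} [Field k] [CommRing K]
    [NoZeroDivisors K] [DecidableEq K] [Algebra k K] [Module.Finite k K] {r n : ℕ}
    (hK : finrank k K = r) (y : ι → Fin n → K)
    (hy : ∀ idx : Fin (r + 1) → ι, ¬ (∀ a b, idx a = idx b) →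
      ∃ s, #(univ.image fun j => y (idx j) s) = 2) :
    ∃ x : ι → Fin (r + 1) → Fin (n * r) → k, IsLocalPMF x := by
  let b := finBasisOfFinrankEq k K hK
  let B : Basis (Fin (n * r)) k (Fin n → K) :=
    finBasisOfFinrankEq _ _ (by simp [finrank_pi_fintype, hK])
  have hpmf := isLocalPMF_mul (Fin.sum_snoc_neg_sum b)
    (fun _ hS hS' => b.linearIndependent.sum_snoc_neg_sum_ne_zero b hS hS') y hy
  exact ⟨_, hpmf.map B.equivFun.toAddMonoidHom B.equivFun.injective⟩

theorem stmt_2_general (k p n m : ℕ) (hk : 3 ≤ k) (hp : p.Prime)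
    (F : Fin m → Fin n → Fin (p ^ (k - 1))) (hinj : Function.Injective F)
    (hF : ∀ v : Fin k → Fin n → Fin (p ^ (k - 1)),
      (∀ j, ∃ i, F i = v j) → ¬ (∀ a b, v a = v b) →
      ∃ i : Fin n, (Finset.univ.image fun j => v j i).card = 2) :
    ∃ x : Fin m → Fin k → Fin (n * (k - 1)) → ZMod p,
      (∀ i, ∑ j, x i j = 0) ∧
      ∀ idx : Fin k → Fin m, ∑ j, x (idx j) j = 0 → ∀ a b, idx a = idx b := by
  have := Fact.mk hp
  obtain ⟨r, rfl⟩ : ∃ r, k = r + 1 := ⟨k - 1, by omega⟩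
  have hr : r ≠ 0 := by omega
  classical
  let g : Fin (p ^ r) ≃ GaloisField p r := (Finite.equivFinOfCardEq (GaloisField.card p r hr)).symm
  refine exists_isLocalPMF_of_finrank_eq (GaloisField.finrank p hr) (fun i s => g (F i s))
    fun idx hidx => ?_
  obtain ⟨s, hs⟩ := hF (fun j => F (idx j)) (fun j => ⟨idx j, rfl⟩)
    fun h => hidx fun a b => hinj (h a b)
  exact ⟨s, by rw [← hs, ← card_image_of_injective _ g.injective, image_image]; rfl⟩

/-- Let `k ≥ 3`, `p` prime, `n ≥ 1`. If `F` is a collection of `m`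
(distinct) vectors in `Z_{p^{k-1}}^n` such that any `k` members (with repetition)
which are not all equal have some coordinate with exactly `2` distinct entries,
then there exists an `(n(k-1), m)` local PMF for `k`-cycles over `F_p`. -/
theorem stmt_2 (k p n m : ℕ) (hk : 3 ≤ k) (hp : p.Prime) (hn : 1 ≤ n)
    (F : Fin m → Fin n → Fin (p ^ (k - 1))) (hinj : Function.Injective F)
    (hF : ∀ v : Fin k → Fin n → Fin (p ^ (k - 1)),
      (∀ j, ∃ i, F i = v j) → ¬ (∀ a b, v a = v b) →
      ∃ i : Fin n, (Finset.univ.image fun j => v j i).card = 2) :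
    ∃ x : Fin m → Fin k → Fin (n * (k - 1)) → ZMod p,
      (∀ i, ∑ j, x i j = 0) ∧
      ∀ idx : Fin k → Fin m, ∑ j, x (idx j) j = 0 → ∀ a b, idx a = idx b :=
  stmt_2_general k p n m hk hp F hinj hF
end

section
/- Let p be a prime and n ≥ 1 an integer. Suppose F is a collection of m vectors in Z_{p^2}^n containing no 3-sunflower. Then there exists a (2n, m) local PMF for triangles (3-cycles) over F_p. -/
/-!
Write each `z ∈ ℤ/p²` through its two base-`p` digits `d(z) ∈ 𝔽_p²`, and let `ρ(u, w) = (w, -u - w)`,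
a linear map with `ρ³ = 1` and `1 + ρ + ρ² = 0`. The `j`-th vector of the `i`-th triangle is
`(ρʲ d(F i k))ₖ ∈ (𝔽_p²)ⁿ = 𝔽_p²ⁿ`, so every triangle sums to zero. If a mixed triple
`d(a) + ρ d(b) + ρ² d(c)` vanishes in a coordinate, then any two of `a, b, c` agreeing there forces
the third to agree too, because `1 + ρ + ρ² = 0` and the `ρʲ` are injective. A mixed zero-sum triple
is therefore a sunflower coordinatewise, and sunflower-freeness leaves only the diagonal triples.
-/

open Finset Function

section Sunflower

variable {α : Type*}

def AllEqualOrPairwiseDistinct (a b c : α) : Prop :=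
  (a = b ∧ b = c) ∨ (a ≠ b ∧ a ≠ c ∧ b ≠ c)

theorem Function.Injective.allEqualOrPairwiseDistinct_iff {β : Type*} {g : α → β}
    (hg : Injective g) {a b c : α} :
    AllEqualOrPairwiseDistinct (g a) (g b) (g c) ↔ AllEqualOrPairwiseDistinct a b c := by
  simp only [AllEqualOrPairwiseDistinct, ne_eq, hg.eq_iff]

end Sunflower

section ZeroSum

variable {ι M : Type*} [AddCommGroup M] {f : ι → M → M}

theorem eq_of_sum_apply_eq_zero [Fintype ι] [DecidableEq ι] (hf : ∀ a, ∑ j, f j a = 0)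
    {c : ι} (hc : Injective (f c)) {v : ι → M} (hv : ∑ j, f j (v j) = 0) {w : M}
    (hw : ∀ j ≠ c, v j = w) : v c = w := by
  apply hc
  have hrest : ∑ j ∈ {c}ᶜ, f j (v j) = ∑ j ∈ {c}ᶜ, f j w :=
    sum_congr rfl fun j hj => by rw [hw j (by simpa using hj)]
  have hv' := Fintype.sum_eq_add_sum_compl c (fun j => f j (v j))
  have hw' := Fintype.sum_eq_add_sum_compl c (fun j => f j w)
  rw [hv, hrest] at hv'
  rw [hf] at hw'
  exact add_right_cancel (hv'.symm.trans hw')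

theorem allEqualOrPairwiseDistinct_of_sum_apply_eq_zero {f : Fin 3 → M → M}
    (hf : ∀ a, ∑ j, f j a = 0) (hinj : ∀ j, Injective (f j)) {v : Fin 3 → M}
    (hv : ∑ j, f j (v j) = 0) : AllEqualOrPairwiseDistinct (v 0) (v 1) (v 2) := by
  have key := fun c w => eq_of_sum_apply_eq_zero hf (hinj c) hv (w := w)
  by_cases h01 : v 0 = v 1
  · refine .inl ⟨h01, (key 2 (v 1) fun j hj => ?_).symm⟩
    fin_cases j <;> simp_all
  by_cases h12 : v 1 = v 2
  · exact absurd (key 0 (v 1) fun j hj => by fin_cases j <;> simp_all) h01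
  by_cases h02 : v 0 = v 2
  · exact absurd (key 1 (v 0) fun j hj => by fin_cases j <;> simp_all).symm h01
  exact .inr ⟨h01, h02, h12⟩

end ZeroSum

section Rotation

variable {R : Type*} [AddCommGroup R]

def rot (a : Fin 2 → R) : Fin 2 → R := ![a 1, -a 0 - a 1]

theorem rot_rot_rot (a : Fin 2 → R) : rot (rot (rot a)) = a := by
  ext i
  fin_cases i <;>
    simp only [rot, Fin.zero_eta, Fin.mk_one, Matrix.cons_val_zero, Matrix.cons_val_one,
      Matrix.cons_val_fin_one] <;> abel

theorem rot_injective : Injective (rot : (Fin 2 → R) → Fin 2 → R) :=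
  LeftInverse.injective (g := fun a => rot (rot a)) rot_rot_rot

theorem sum_rot_iterate (a : Fin 2 → R) : ∑ j : Fin 3, rot^[j] a = 0 := by
  rw [Fin.sum_univ_three]
  change a + rot a + rot (rot a) = 0
  ext i
  fin_cases i <;>
    simp only [rot, Fin.zero_eta, Fin.mk_one, Matrix.cons_val_zero, Matrix.cons_val_one,
      Matrix.cons_val_fin_one, Pi.add_apply, Pi.zero_apply] <;> abel

end Rotation

section Flatten

variable {R : Type*} {d n : ℕ}

/-- Coordinate `k + n * i` of `flatten v` is `v k i`. -/
def flatten (v : Fin n → Fin d → R) (c : Fin (d * n)) : R :=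
  v (finProdFinEquiv.symm c).2 (finProdFinEquiv.symm c).1

theorem flatten_sum [AddCommMonoid R] {ι : Type*} (s : Finset ι) (v : ι → Fin n → Fin d → R) :
    flatten (∑ j ∈ s, v j) = ∑ j ∈ s, flatten (v j) := by
  ext c; simp [flatten, Finset.sum_apply]

theorem flatten_eq_zero_iff [Zero R] {v : Fin n → Fin d → R} : flatten v = 0 ↔ v = 0 := by
  refine ⟨fun h => ?_, fun h => h ▸ rfl⟩
  ext k i
  simpa [flatten] using congrFun h (finProdFinEquiv (i, k))

end Flatten

def baseDigits (p : ℕ) (z : Fin (p ^ 2)) : Fin 2 → ZMod p :=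
  ![((z : ℕ) % p : ℕ), ((z : ℕ) / p : ℕ)]

theorem baseDigits_injective (p : ℕ) : Injective (baseDigits p) := by
  intro z z' h
  have hlt : ∀ z : Fin (p ^ 2), (z : ℕ) / p < p :=
    fun z => Nat.div_lt_of_lt_mul (sq p ▸ z.isLt)
  have h0 := congrFun h 0
  have h1 := congrFun h 1
  simp only [baseDigits, Matrix.cons_val_zero, Matrix.cons_val_one,
    ZMod.natCast_eq_natCast_iff', Nat.mod_mod, Nat.mod_eq_of_lt (hlt _)] at h0 h1
  ext
  rw [← Nat.div_add_mod z p, ← Nat.div_add_mod z' p, h0, h1]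

theorem stmt_3_general (p n m : ℕ)
    (F : Fin m → Fin n → Fin (p ^ 2)) (hinj : Function.Injective F)
    (hsf : ∀ v₁ v₂ v₃ : Fin n → Fin (p ^ 2),
      (∃ i, F i = v₁) → (∃ i, F i = v₂) → (∃ i, F i = v₃) →
      (∀ i : Fin n, (v₁ i = v₂ i ∧ v₂ i = v₃ i) ∨
        (v₁ i ≠ v₂ i ∧ v₁ i ≠ v₃ i ∧ v₂ i ≠ v₃ i)) →
      v₁ = v₂ ∧ v₂ = v₃) :
    ∃ x : Fin m → Fin 3 → Fin (2 * n) → ZMod p,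
      (∀ i, ∑ j, x i j = 0) ∧
      ∀ idx : Fin 3 → Fin m, ∑ j, x (idx j) j = 0 → ∀ a b, idx a = idx b := by
  refine ⟨fun i j => flatten fun k => rot^[j] (baseDigits p (F i k)), fun i => ?_, fun idx h => ?_⟩
  · rw [← flatten_sum, flatten_eq_zero_iff]
    ext k : 1
    simp only [Finset.sum_apply, sum_rot_iterate, Pi.zero_apply]
  rw [← flatten_sum, flatten_eq_zero_iff] at h
  have hcoord : ∀ k, AllEqualOrPairwiseDistinct (F (idx 0) k) (F (idx 1) k) (F (idx 2) k) :=
    fun k => (baseDigits_injective p).allEqualOrPairwiseDistinct_iff.mp <|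
      allEqualOrPairwiseDistinct_of_sum_apply_eq_zero (v := fun j => baseDigits p (F (idx j) k))
        sum_rot_iterate (fun j => rot_injective.iterate j)
        (by simpa only [Finset.sum_apply, Pi.zero_apply] using congrFun h k)
  obtain ⟨h01, h12⟩ := hsf _ _ _ ⟨_, rfl⟩ ⟨_, rfl⟩ ⟨_, rfl⟩ hcoord
  have hconst : ∀ a, idx a = idx 0 := by
    intro a; fin_cases a <;> simp [hinj h01, hinj h12]
  exact fun a b => (hconst a).trans (hconst b).symm

/-- Let `p` be prime and `n ≥ 1`. If `F` is a collection of `m`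
(distinct) vectors in `Z_{p^2}^n` containing no `3`-sunflower, then there exists
a `(2n, m)` local PMF for triangles (`3`-cycles) over `F_p`. -/
theorem stmt_3 (p n m : ℕ) (hp : p.Prime) (hn : 1 ≤ n)
    (F : Fin m → Fin n → Fin (p ^ 2)) (hinj : Function.Injective F)
    (hsf : ∀ v₁ v₂ v₃ : Fin n → Fin (p ^ 2),
      (∃ i, F i = v₁) → (∃ i, F i = v₂) → (∃ i, F i = v₃) →
      (∀ i : Fin n, (v₁ i = v₂ i ∧ v₂ i = v₃ i) ∨
        (v₁ i ≠ v₂ i ∧ v₁ i ≠ v₃ i ∧ v₂ i ≠ v₃ i)) →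
      v₁ = v₂ ∧ v₂ = v₃) :
    ∃ x : Fin m → Fin 3 → Fin (2 * n) → ZMod p,
      (∀ i, ∑ j, x i j = 0) ∧
      ∀ idx : Fin 3 → Fin m, ∑ j, x (idx j) j = 0 → ∀ a b, idx a = idx b :=
  stmt_3_general p n m F hinj hsf
end

section
/- Let F be a collection of m vectors in F_3^n (identified with Z_3^n) containing no 3-sunflower. Then the family {(x, x, x) : x ∈ F} is an (n, m) local PMF for triangles (3-cycles) over F_3; that is, x+x+x = 0 for every x ∈ F, and for all x, y, z ∈ F, if x + y + z = 0 in F_3^n then x = y = z. -/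
/-- If `F ⊆ F_3^n` contains no `3`-sunflower, then the family
`{(x,x,x) : x ∈ F}` is a local PMF for triangles over `F_3`: `x + x + x = 0`
for every `x ∈ F`, and whenever `x, y, z ∈ F` satisfy `x + y + z = 0`,
we have `x = y = z`. -/
theorem stmt_4 (n : ℕ) (F : Set (Fin n → ZMod 3))
    (hsf : ∀ v₁ v₂ v₃ : Fin n → ZMod 3, v₁ ∈ F → v₂ ∈ F → v₃ ∈ F →
      (∀ i : Fin n, (v₁ i = v₂ i ∧ v₂ i = v₃ i) ∨
        (v₁ i ≠ v₂ i ∧ v₁ i ≠ v₃ i ∧ v₂ i ≠ v₃ i)) →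
      v₁ = v₂ ∧ v₂ = v₃) :
    (∀ x ∈ F, x + x + x = 0) ∧
    (∀ x y z : Fin n → ZMod 3, x ∈ F → y ∈ F → z ∈ F →
      x + y + z = 0 → x = y ∧ y = z) := by
  constructor
  · intro x _
    funext i
    have : ∀ a : ZMod 3, a + a + a = 0 := by decide
    exact this (x i)
  · intro x y z hx hy hz hsum
    apply hsf x y z hx hy hz
    intro i
    have h : x i + y i + z i = 0 := congrFun hsum i
    revert h
    have : ∀ a b c : ZMod 3, a + b + c = 0 →
        (a = b ∧ b = c) ∨ (a ≠ b ∧ a ≠ c ∧ b ≠ c) := by decide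
    exact this (x i) (y i) (z i)
end

section
/- Let p be a prime, ℓ ≥ 1 an integer, and k ≥ 4 an integer. There does not exist a collection of p^ℓ distinct matrices B_1, ..., B_{p^ℓ}, each an ℓ×k matrix over F_p, satisfying both: (1) for every i, the sum of the k columns of B_i is the zero vector; and (2) for every choice of indices i_1, ..., i_k ∈ [p^ℓ] that are not all equal and not all pairwise distinct, the sum B_{i_1}^{(1)} + B_{i_2}^{(2)} + ... + B_{i_k}^{(k)} is nonzero. -/
lemma sum_replace {M : Type*} [AddCommGroup M] {k : ℕ} (f g h : Fin k → M)
    (c0 c1 : Fin k) (hne : c0 ≠ c1) :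
    ∑ c, (if c = c0 then f c else if c = c1 then g c else h c)
      = (∑ c, h c) + (f c0 - h c0) + (g c1 - h c1) := by
  have key : ∀ c : Fin k, (if c = c0 then f c else if c = c1 then g c else h c)
      = h c + (if c = c0 then f c - h c else 0) + (if c = c1 then g c - h c else 0) := by
    intro c
    by_cases h0 : c = c0
    · subst h0
      rw [if_pos rfl, if_pos rfl, if_neg hne]
      abel
    · by_cases h1 : c = c1
      · subst h1
        rw [if_neg h0, if_pos rfl, if_neg h0, if_pos rfl]
        abel
      · simp [h0, h1]
  rw [Finset.sum_congr rfl (fun c _ => key c), Finset.sum_add_distrib,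
    Finset.sum_add_distrib,
    Finset.sum_ite_eq' Finset.univ c0 (fun c => f c - h c),
    Finset.sum_ite_eq' Finset.univ c1 (fun c => g c - h c)]
  simp

/-- For `p` prime, `ℓ ≥ 1` and `k ≥ 4`, there is no collection of
`p^ℓ` distinct `ℓ×k` matrices over `F_p` such that (1) each matrix has columns
summing to zero, and (2) for all indices `i_1, ..., i_k` which are not all equal
and not all pairwise distinct, `B_{i_1}^{(1)} + ⋯ + B_{i_k}^{(k)} ≠ 0`. -/
theorem stmt_6 (p ℓ k : ℕ) (hp : p.Prime) (hℓ : 1 ≤ ℓ) (hk : 4 ≤ k) :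
    ¬ ∃ B : Fin (p ^ ℓ) → Matrix (Fin ℓ) (Fin k) (ZMod p),
      Function.Injective B ∧
      (∀ i, (∑ c : Fin k, fun r => B i r c) = 0) ∧
      (∀ idx : Fin k → Fin (p ^ ℓ),
        ¬ (∀ a b, idx a = idx b) → ¬ Function.Injective idx →
        (∑ c : Fin k, fun r => B (idx c) r c) ≠ 0) := by
  rintro ⟨B, hBinj, h1, h2⟩
  haveI : NeZero p := ⟨hp.pos.ne'⟩
  have hcard : 2 ≤ p ^ ℓ := by
    calc 2 ≤ p := hp.two_le
    _ = p ^ 1 := (pow_one p).symm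
    _ ≤ p ^ ℓ := Nat.pow_le_pow_right hp.pos hℓ
  set c0 : Fin k := ⟨0, by omega⟩ with hc0
  set c1 : Fin k := ⟨1, by omega⟩ with hc1
  set c2 : Fin k := ⟨2, by omega⟩ with hc2
  set c3 : Fin k := ⟨3, by omega⟩ with hc3
  have hc01 : c0 ≠ c1 := by simp [hc0, hc1, Fin.ext_iff]
  have hc02 : c2 ≠ c0 := by simp [hc0, hc2, Fin.ext_iff]
  have hc12 : c2 ≠ c1 := by simp [hc1, hc2, Fin.ext_iff]
  have hc03 : c3 ≠ c0 := by simp [hc0, hc3, Fin.ext_iff]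
  have hc13 : c3 ≠ c1 := by simp [hc1, hc3, Fin.ext_iff]
  have hc23 : c2 ≠ c3 := by simp [hc2, hc3, Fin.ext_iff]
  have hsum : ∀ i r, ∑ c, B i r c = 0 := fun i r => by
    have := congrFun (h1 i) r
    simpa using this
  -- column-0 map is injective
  have colinj : Function.Injective (fun i => (fun r => B i r c0)) := by
    intro i j hij
    by_contra hne
    obtain ⟨idx, hidx⟩ : ∃ idx : Fin k → Fin (p ^ ℓ),
        idx = fun c => if c = c0 then i else if c = c1 then j else j := ⟨_, rfl⟩
    have hS := h2 idx ?_ ?_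
    · apply hS
      funext r
      simp only [Finset.sum_apply, Pi.zero_apply]
      have hterm : ∀ c : Fin k, B (idx c) r c
          = (if c = c0 then B i r c else if c = c1 then B j r c else B j r c) := by
        intro c; simp only [hidx]; split_ifs <;> rfl
      rw [Finset.sum_congr rfl (fun c _ => hterm c),
        sum_replace (fun c => B i r c) (fun c => B j r c) (fun c => B j r c) c0 c1 hc01,
        hsum j r]
      have := congrFun hij r
      simp only at this
      rw [this]
      abel
    · intro hall
      have := hall c0 c1
      simp [hidx, hc01.symm] at this
      exact hne this
    · intro hinj
      have : c1 = c2 := hinj (by simp [hidx, hc01.symm, hc02, hc12])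
      exact hc12 this.symm
  have colbij : Function.Bijective (fun i => (fun r => B i r c0)) := by
    rw [Fintype.bijective_iff_injective_and_card]
    refine ⟨colinj, ?_⟩
    simp [ZMod.card]
  -- final contradiction
  obtain ⟨m, hm⟩ : ∃ m : Fin (p ^ ℓ), m = ⟨0, by omega⟩ := ⟨_, rfl⟩
  obtain ⟨j, hj⟩ : ∃ j : Fin (p ^ ℓ), j = ⟨1, by omega⟩ := ⟨_, rfl⟩
  have hjm : j ≠ m := by simp [hj, hm, Fin.ext_iff]
  obtain ⟨i, hi⟩ := colbij.surjective (fun r => B m r c0 + B m r c1 - B j r c1)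
  obtain ⟨idx, hidx⟩ : ∃ idx : Fin k → Fin (p ^ ℓ),
      idx = fun c => if c = c0 then i else if c = c1 then j else m := ⟨_, rfl⟩
  have hS := h2 idx ?_ ?_
  · apply hS
    funext r
    simp only [Finset.sum_apply, Pi.zero_apply]
    have hterm : ∀ c : Fin k, B (idx c) r c
        = (if c = c0 then B i r c else if c = c1 then B j r c else B m r c) := by
      intro c; simp only [hidx]; split_ifs <;> rfl
    rw [Finset.sum_congr rfl (fun c _ => hterm c),
      sum_replace (fun c => B i r c) (fun c => B j r c) (fun c => B m r c) c0 c1 hc01,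
      hsum m r]
    have hir := congrFun hi r
    simp only at hir
    rw [hir]
    abel
  · intro hall
    have := hall c1 c2
    simp [hidx, hc01.symm, hc02, hc12] at this
    exact hjm this
  · intro hinj
    have : c2 = c3 := hinj (by simp [hidx, hc02, hc12, hc03, hc13])
    exact hc23 this
end

section
/- Let k ≥ 3 and n ≥ 1 be integers, and let F be a collection of balanced vectors in Z_k^{nk} such that for every k vectors v_1, ..., v_k ∈ F (repetitions allowed), if the sets v_1|_1, v_2|_2, ..., v_k|_k form a partition of [nk] then v_1 = v_2 = ... = v_k. Then |F| ≤ C(nk, n), the binomial coefficient 'nk choose n'. -/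
/-- Let `k ≥ 3`, `n ≥ 1`, and let `F` be a collection of balanced
vectors in `Z_k^{nk}` such that for any `k` members `v_1, ..., v_k` of `F`
(with repetition), if the sets `v_1|_1, ..., v_k|_k` partition `[nk]` then
`v_1 = ⋯ = v_k`. Then `|F| ≤ C(nk, n)`. -/
theorem stmt_8 (k n : ℕ) (hk : 3 ≤ k) (hn : 1 ≤ n)
    (F : Finset (Fin (n * k) → Fin k))
    (hbal : ∀ v ∈ F, ∀ j : Fin k, (Finset.univ.filter fun i => v i = j).card = n)
    (hF : ∀ v : Fin k → Fin (n * k) → Fin k, (∀ j, v j ∈ F) →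
      (∀ i : Fin (n * k), ∃! j : Fin k, v j i = j) → ∀ a b, v a = v b) :
    F.card ≤ (n * k).choose n := by
  classical
  set j0 : Fin k := ⟨0, by omega⟩ with hj0
  set j1 : Fin k := ⟨1, by omega⟩ with hj1
  have hj01 : j1 ≠ j0 := by simp [hj0, hj1, Fin.ext_iff]
  have hinj : Set.InjOn (fun v : Fin (n * k) → Fin k => Finset.univ.filter fun i => v i = j0) ↑F := by
    intro v hv w hw h
    have hset : ∀ i, v i = j0 ↔ w i = j0 := by
      intro i
      have := Finset.ext_iff.mp h i
      simpa using this
    set v' : Fin k → Fin (n * k) → Fin k := fun j => if j = j0 then v else w with hv'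
    have key : ∀ i : Fin (n * k), ∃! j : Fin k, v' j i = j := by
      intro i
      by_cases hwi : w i = j0
      · refine ⟨j0, by simp [hv', (hset i).mpr hwi], ?_⟩
        intro j hj
        by_contra hne
        simp only [hv', if_neg hne] at hj
        exact hne (hj.symm.trans hwi)
      · refine ⟨w i, by simp [hv', hwi], ?_⟩
        intro j hj
        by_cases hje : j = j0
        · subst hje
          simp only [hv', if_pos rfl] at hj
          exact absurd ((hset i).mp hj) hwi
        · simp only [hv', if_neg hje] at hj
          exact hj.symm
    have hmem : ∀ j, v' j ∈ F := by
      intro j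
      by_cases hj : j = j0
      · simpa [hv', hj] using hv
      · simpa [hv', hj] using hw
    have := hF v' hmem key j0 j1
    simpa [hv', if_neg hj01] using this
  calc F.card = (F.image fun v => Finset.univ.filter fun i => v i = j0).card :=
        (Finset.card_image_of_injOn hinj).symm
    _ ≤ (Finset.powersetCard n (Finset.univ : Finset (Fin (n * k)))).card := by
        apply Finset.card_le_card
        intro s hs
        simp only [Finset.mem_image] at hs
        obtain ⟨v, hv, rfl⟩ := hs
        rw [Finset.mem_powersetCard]
        exact ⟨Finset.subset_univ _, hbal v hv j0⟩
    _ = (n * k).choose n := by simp [Finset.card_powersetCard]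
end

section
/- Let k ≥ 3 and n ≥ 1 be integers, let p be a prime, and let F be a collection of m balanced vectors in Z_k^{nk} such that for every k vectors v_1, ..., v_k ∈ F (repetitions allowed), the sets v_1|_1, ..., v_k|_k form a partition of [nk] if and only if v_1 = ... = v_k. Then there exists an (nk, m) local PMF for k-cycles over F_p. (Concretely, mapping each v ∈ F to the k-tuple whose first k−1 vectors are the characteristic vectors in F_p^{nk} of v|_1, ..., v|_{k−1}, and whose last vector is −1 times the characteristic vector of [nk] ∖ v|_k, yields such a local PMF.) -/
/-- Let `k ≥ 3`, `n ≥ 1`, `p` prime, and let `F` be a collection of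
`m` (distinct) balanced vectors in `Z_k^{nk}` such that for any `k` members
`v_1, ..., v_k` of `F` (with repetition), the sets `v_1|_1, ..., v_k|_k`
partition `[nk]` iff `v_1 = ⋯ = v_k`. Then there exists an `(nk, m)` local PMF
for `k`-cycles over `F_p`. -/
theorem stmt_9 (k n p m : ℕ) (hk : 3 ≤ k) (hn : 1 ≤ n) (hp : p.Prime)
    (F : Fin m → Fin (n * k) → Fin k) (hinj : Function.Injective F)
    (hbal : ∀ i, ∀ j : Fin k, (Finset.univ.filter fun t => F i t = j).card = n)
    (hF : ∀ v : Fin k → Fin (n * k) → Fin k, (∀ j, ∃ i, F i = v j) →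
      ((∀ t : Fin (n * k), ∃! j : Fin k, v j t = j) ↔ ∀ a b, v a = v b)) :
    ∃ x : Fin m → Fin k → Fin (n * k) → ZMod p,
      (∀ i, ∑ j, x i j = 0) ∧
      ∀ idx : Fin k → Fin m, ∑ j, x (idx j) j = 0 → ∀ a b, idx a = idx b := by
  haveI : NeZero k := ⟨by omega⟩
  haveI : Fact p.Prime := ⟨hp⟩
  refine ⟨fun i j t => (if F i t = j then 1 else 0) - (if j = 0 then 1 else 0), ?_, ?_⟩
  · intro i
    funext t
    simp only [Finset.sum_apply, Pi.zero_apply, Finset.sum_sub_distrib,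
      Finset.sum_ite_eq, Finset.sum_ite_eq', Finset.mem_univ, if_true]
    ring
  · intro idx h a b
    set v : Fin k → Fin (n * k) → Fin k := fun j => F (idx j) with hv
    -- the per-coordinate count
    set c : Fin (n * k) → ℕ := fun t => (Finset.univ.filter fun j => v j t = j).card with hc
    have hmod : ∀ t : Fin (n * k), ((c t : ZMod p)) = 1 := by
      intro t
      have ht := congrFun h t
      simp only [Finset.sum_apply, Pi.zero_apply, Finset.sum_sub_distrib,
        Finset.sum_ite_eq', Finset.mem_univ, if_true] at ht
      rw [Finset.sum_boole] at ht
      exact sub_eq_zero.mp ht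
    have hpos : ∀ t, 1 ≤ c t := by
      intro t
      by_contra hlt
      have h0 : c t = 0 := by omega
      have := hmod t
      rw [h0] at this
      simp at this
    have hsum : ∑ t : Fin (n * k), c t = n * k := by
      have e1 : ∀ t, c t = ∑ j : Fin k, if v j t = j then 1 else 0 :=
        fun t => Finset.card_filter _ _
      calc ∑ t : Fin (n * k), c t
          = ∑ t : Fin (n * k), ∑ j : Fin k, if v j t = j then 1 else 0 := by
            exact Finset.sum_congr rfl fun t _ => e1 t
        _ = ∑ j : Fin k, ∑ t : Fin (n * k), if v j t = j then 1 else 0 :=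
            Finset.sum_comm
        _ = ∑ j : Fin k, (Finset.univ.filter fun t => v j t = j).card :=
            Finset.sum_congr rfl fun j _ => (Finset.card_filter _ _).symm
        _ = ∑ j : Fin k, n := by
            exact Finset.sum_congr rfl fun j _ => hbal (idx j) j
        _ = n * k := by simp [mul_comm]
    have hone : ∀ t, c t = 1 := by
      have hle : ∀ t ∈ (Finset.univ : Finset (Fin (n * k))), 1 ≤ c t :=
        fun t _ => hpos t
      have hsums : ∑ t : Fin (n * k), (1 : ℕ) = ∑ t : Fin (n * k), c t := by
        simp [hsum]
      have := (Finset.sum_eq_sum_iff_of_le hle).mp hsums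
      intro t
      exact (this t (Finset.mem_univ t)).symm
    have huniq : ∀ t : Fin (n * k), ∃! j : Fin k, v j t = j := by
      intro t
      obtain ⟨j₀, hj₀⟩ := Finset.card_eq_one.mp (hone t)
      refine ⟨j₀, ?_, ?_⟩
      · have : j₀ ∈ (Finset.univ.filter fun j => v j t = j) := by
          rw [hj₀]; exact Finset.mem_singleton_self j₀
        exact (Finset.mem_filter.mp this).2
      · intro j hj
        have : j ∈ (Finset.univ.filter fun j => v j t = j) :=
          Finset.mem_filter.mpr ⟨Finset.mem_univ j, hj⟩
        rw [hj₀] at this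
        exact Finset.mem_singleton.mp this
    have hvv := (hF v (fun j => ⟨idx j, rfl⟩)).mp huniq a b
    exact hinj hvv
end

section
/- Let k ≥ 3 be an integer, p a prime, and suppose {(x_i^{(1)},...,x_i^{(k)})}_{i∈[m]} is an (n, m) local PMF for k-cycles over F_p. For each 1 ≤ j ≤ k let f_j : F_p^n → {0,1} be the characteristic function of the set {x_i^{(j)} : i ∈ [m]}. Then the set of k-cycles of the tuple (f_1, ..., f_k) is exactly {(x_i^{(1)},...,x_i^{(k)}) : i ∈ [m]} (so there are exactly m of them and they are pairwise disjoint), and (f_1, ..., f_k) is ε-far from k-cycle-freeness for ε = m/p^n. -/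
/-!
Mixing coordinates from different tuples of a local PMF never sums to zero, so the only
cycles of the characteristic functions are the tuples themselves, and each coordinate map
`i ↦ x i j` is injective (replace one coordinate of a tuple by an equal one from another tuple).
A cycle-free `g` must therefore switch off at least one coordinate of every tuple; these
coordinates are distinct points where `f` and `g` differ, so there are at least `m` of them.
-/

open Finset

variable {ι κ G : Type*} [Fintype ι] [AddCommMonoid G]

def IsCycleOf (f : ι → G → Bool) (y : ι → G) : Prop :=
  ∑ j, y j = 0 ∧ ∀ j, f j (y j) = true

structure IsLocalPMF_s10 (x : κ → ι → G) : Prop where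
  sum_eq_zero : ∀ i, ∑ j, x i j = 0
  eq_of_sum_eq_zero : ∀ idx : ι → κ, ∑ j, x (idx j) j = 0 → ∀ a b, idx a = idx b

namespace IsLocalPMF_s10

variable {x : κ → ι → G}

theorem injective_apply [Nontrivial ι] (hx : IsLocalPMF_s10 x) (j : ι) :
    Function.Injective fun i => x i j := by
  classical
  intro a b hab
  let idx : ι → κ := Function.update (fun _ => b) j a
  have hcol : ∀ j', x (idx j') j' = x b j' := by
    intro j'
    rcases eq_or_ne j' j with rfl | hj'
    · simpa [idx] using hab
    · simp [idx, hj']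
  obtain ⟨j₂, hj₂⟩ := exists_ne j
  have h := hx.eq_of_sum_eq_zero idx (by simp only [hcol, hx.sum_eq_zero]) j j₂
  simpa [idx, hj₂] using h

theorem isCycleOf_iff [Nonempty ι] (hx : IsLocalPMF_s10 x) {f : ι → G → Bool}
    (hf : ∀ j v, f j v = true ↔ ∃ i, x i j = v) (y : ι → G) :
    IsCycleOf f y ↔ ∃ i, y = x i := by
  constructor
  · rintro ⟨hy, hyf⟩
    choose idx hidx using fun j => (hf j (y j)).1 (hyf j)
    have hsum : ∑ j, x (idx j) j = 0 := by simpa only [hidx] using hy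
    obtain ⟨j₀⟩ := ‹Nonempty ι›
    exact ⟨idx j₀, funext fun j => by rw [← hidx j, hx.eq_of_sum_eq_zero idx hsum j j₀]⟩
  · rintro ⟨i, rfl⟩
    exact ⟨hx.sum_eq_zero i, fun j => (hf j _).2 ⟨i, rfl⟩⟩

theorem card_le_sum_card_ne [Fintype κ] [Nontrivial ι] [Fintype G] (hx : IsLocalPMF_s10 x)
    {f : ι → G → Bool} (hf : ∀ j v, f j v = true ↔ ∃ i, x i j = v)
    {g : ι → G → Bool} (hg : ∀ y, ¬ IsCycleOf g y) :
    Fintype.card κ ≤ ∑ j, #{v | f j v ≠ g j v} := by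
  classical
  have hbroken : ∀ i, ∃ j, g j (x i j) ≠ true := by
    intro i
    by_contra! h
    exact hg (x i) ⟨hx.sum_eq_zero i, h⟩
  choose jOf hjOf using hbroken
  calc Fintype.card κ = ∑ j, #{i | jOf i = j} :=
        card_eq_sum_card_fiberwise fun i _ => mem_univ (jOf i)
    _ ≤ ∑ j, #{v | f j v ≠ g j v} := by
        refine sum_le_sum fun j _ => card_le_card_of_injOn (fun i => x i j) ?_
          (hx.injective_apply j).injOn
        intro i hi
        simp only [coe_filter, mem_univ, true_and, Set.mem_ofPred_eq] at hi ⊢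
        rw [(hf j (x i j)).2 ⟨i, rfl⟩, ← hi]
        exact (hjOf i).symm

end IsLocalPMF_s10

/-- Let `{(x_i^{(1)},...,x_i^{(k)})}_{i∈[m]}` be an `(n, m)` local
PMF for `k`-cycles over `F_p`, and for each `j` let `f_j` be the characteristic
function of `{x_i^{(j)} : i ∈ [m]}`. Then the `k`-cycles of `(f_1, ..., f_k)`
are exactly the tuples `(x_i^{(1)},...,x_i^{(k)})` (so there are exactly `m` of
them, pairwise disjoint), and `(f_1,...,f_k)` is `(m/p^n)`-far from
`k`-cycle-freeness. -/
theorem stmt_10 (k n m p : ℕ) [Fact p.Prime] (hk : 3 ≤ k)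
    (x : Fin m → Fin k → Fin n → ZMod p)
    (hsum : ∀ i, ∑ j, x i j = 0)
    (hpmf : ∀ idx : Fin k → Fin m, ∑ j, x (idx j) j = 0 → ∀ a b, idx a = idx b)
    (f : Fin k → (Fin n → ZMod p) → Bool)
    (hf : ∀ j v, f j v = true ↔ ∃ i, x i j = v) :
    (∀ y : Fin k → Fin n → ZMod p,
      ((∑ j, y j = 0) ∧ ∀ j, f j (y j) = true) ↔ ∃ i, y = x i) ∧
    (∀ j, Function.Injective fun i => x i j) ∧
    (∀ g : Fin k → (Fin n → ZMod p) → Bool,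
      (¬ ∃ y : Fin k → Fin n → ZMod p, (∑ j, y j = 0) ∧ ∀ j, g j (y j) = true) →
      (m : ℝ) / (p ^ n : ℝ) ≤
        ∑ j, ((Finset.univ.filter fun v => f j v ≠ g j v).card : ℝ) / (p ^ n : ℝ)) := by
  have : Nontrivial (Fin k) := Fin.nontrivial_iff_two_le.2 (by omega)
  have hx : IsLocalPMF_s10 x := ⟨hsum, hpmf⟩
  refine ⟨hx.isCycleOf_iff hf, hx.injective_apply, fun g hg => ?_⟩
  have hcard := hx.card_le_sum_card_ne hf fun y hy => hg ⟨y, hy⟩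
  rw [Fintype.card_fin] at hcard
  rw [← Finset.sum_div]
  exact div_le_div_of_nonneg_right (by exact_mod_cast hcard) (by positivity)
end

section
/- Let k ≥ 3 be an integer and p a prime. If there exists an (n, m) PMF for k-cycles over F_p, then there exists an (nm, m!) local PMF for k-cycles over F_p. (Concretely, for every permutation π of [m], concatenating the m k-tuples of the PMF in the order given by π yields a k-tuple of vectors of length nm, and the collection of these m! k-tuples is a local PMF.) -/
/-- Let `k ≥ 3` and `p` prime. If there exists an `(n, m)` PMF for
`k`-cycles over `F_p`, then there exists an `(nm, m!)` local PMF for `k`-cycles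
over `F_p`. -/
theorem stmt_11 (k n m p : ℕ) (hk : 3 ≤ k) (hp : p.Prime)
    (x : Fin m → Fin k → Fin n → ZMod p)
    (hsum : ∀ i, ∑ j, x i j = 0)
    (hpmf : ∀ π : Fin k → Equiv.Perm (Fin m),
      (∀ a b, π a = π b) ∨ ∃ i : Fin m, ∑ j, x (π j i) j ≠ 0) :
    ∃ y : Fin (Nat.factorial m) → Fin k → Fin (n * m) → ZMod p,
      (∀ i, ∑ j, y i j = 0) ∧
      ∀ idx : Fin k → Fin (Nat.factorial m),
        ∑ j, y (idx j) j = 0 → ∀ a b, idx a = idx b := by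
  have hcard : Fintype.card (Equiv.Perm (Fin m)) = Nat.factorial m := by
    simp [Fintype.card_perm]
  let e : Fin (Nat.factorial m) ≃ Equiv.Perm (Fin m) :=
    (Fintype.equivFinOfCardEq hcard).symm
  refine ⟨fun s j q => x (e s (finProdFinEquiv.symm q).2) j (finProdFinEquiv.symm q).1,
    ?_, ?_⟩
  · intro s
    funext q
    have := congrFun (hsum (e s (finProdFinEquiv.symm q).2)) (finProdFinEquiv.symm q).1
    simpa using this
  · intro idx hzero a b
    rcases hpmf (fun j => e (idx j)) with h | ⟨i, hi⟩
    · have : e (idx a) = e (idx b) := h a b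
      exact e.injective this
    · exfalso
      apply hi
      funext v
      have := congrFun hzero (finProdFinEquiv (v, i))
      simpa only [Finset.sum_apply, Equiv.symm_apply_apply, Pi.zero_apply] using this
end

section
/- Let k ≥ 3 be an integer and p a prime. If there exist an (n, m) local PMF for k-cycles over F_p and an (n', m') local PMF for k-cycles over F_p, then there exists an (n + n', m·m') local PMF for k-cycles over F_p. (Concretely, concatenating every k-tuple of the first family coordinate-wise with every k-tuple of the second family yields such a local PMF.) -/
/-!
Concatenating coordinates embeds `F_p^n × F_p^n'` additively into `F_p^(n+n')`, so a sum of
concatenated vectors vanishes exactly when both halves vanish. A product family of tuples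
therefore inherits both defining properties from its factors: the zero-sum condition holds
componentwise, and a vanishing cross sum forces both index projections, hence the indices, to
agree.
-/

open Function

def Fin.appendAddEquiv (M : Type*) [AddZeroClass M] (m n : ℕ) :
    (Fin m → M) × (Fin n → M) ≃+ (Fin (m + n) → M) where
  __ := Fin.appendEquiv m n
  map_add' u v := by
    ext i
    refine Fin.addCases (fun i => ?_) (fun i => ?_) i <;> simp [Fin.appendEquiv]

structure IsLocalPMF_s12 {ι κ V : Type*} [Fintype κ] [AddCommMonoid V] (x : ι → κ → V) : Prop where
  sum_eq_zero : ∀ i, ∑ j, x i j = 0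
  eq_of_sum_eq_zero : ∀ idx : κ → ι, ∑ j, x (idx j) j = 0 → ∀ a b, idx a = idx b

namespace IsLocalPMF_s12

variable {ι ι' κ V W : Type*} [Fintype κ] [AddCommMonoid V] [AddCommMonoid W]
  {x : ι → κ → V}

theorem prod {y : ι' → κ → W} (hx : IsLocalPMF_s12 x) (hy : IsLocalPMF_s12 y) :
    IsLocalPMF_s12 fun (i : ι × ι') j => (x i.1 j, y i.2 j) where
  sum_eq_zero i := Prod.ext (by simp [Prod.fst_sum, hx.sum_eq_zero]) (by simp [Prod.snd_sum, hy.sum_eq_zero])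
  eq_of_sum_eq_zero idx hsum a b := by
    have hfst : ∑ j, x (idx j).1 j = 0 := by simpa [Prod.fst_sum] using congrArg Prod.fst hsum
    have hsnd : ∑ j, y (idx j).2 j = 0 := by simpa [Prod.snd_sum] using congrArg Prod.snd hsum
    exact Prod.ext (hx.eq_of_sum_eq_zero _ hfst a b) (hy.eq_of_sum_eq_zero _ hsnd a b)

theorem map_s12 (hx : IsLocalPMF_s12 x) (f : V →+ W) (hf : Injective f) :
    IsLocalPMF_s12 fun i j => f (x i j) where
  sum_eq_zero i := by rw [← map_sum, hx.sum_eq_zero, map_zero]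
  eq_of_sum_eq_zero idx hsum := by
    rw [← map_sum, ← map_zero f] at hsum
    exact hx.eq_of_sum_eq_zero idx (hf hsum)

theorem comp (hx : IsLocalPMF_s12 x) {e : ι' → ι} (he : Injective e) : IsLocalPMF_s12 (x ∘ e) where
  sum_eq_zero i := hx.sum_eq_zero (e i)
  eq_of_sum_eq_zero idx hsum a b := he (hx.eq_of_sum_eq_zero (e ∘ idx) hsum a b)

end IsLocalPMF_s12

theorem stmt_12_general (k p n n' m m' : ℕ)
    (x : Fin m → Fin k → Fin n → ZMod p)
    (hxsum : ∀ i, ∑ j, x i j = 0)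
    (hxpmf : ∀ idx : Fin k → Fin m, ∑ j, x (idx j) j = 0 → ∀ a b, idx a = idx b)
    (y : Fin m' → Fin k → Fin n' → ZMod p)
    (hysum : ∀ i, ∑ j, y i j = 0)
    (hypmf : ∀ idx : Fin k → Fin m', ∑ j, y (idx j) j = 0 → ∀ a b, idx a = idx b) :
    ∃ z : Fin (m * m') → Fin k → Fin (n + n') → ZMod p,
      (∀ i, ∑ j, z i j = 0) ∧
      ∀ idx : Fin k → Fin (m * m'), ∑ j, z (idx j) j = 0 → ∀ a b, idx a = idx b := by
  let append := Fin.appendAddEquiv (ZMod p) n n'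
  have hz := ((IsLocalPMF_s12.prod ⟨hxsum, hxpmf⟩ ⟨hysum, hypmf⟩).map_s12 append.toAddMonoidHom
    append.injective).comp finProdFinEquiv.symm.injective
  exact ⟨_, hz.sum_eq_zero, hz.eq_of_sum_eq_zero⟩

/-- Let `k ≥ 3` and `p` prime. Given an `(n, m)` local PMF and an
`(n', m')` local PMF for `k`-cycles over `F_p`, there exists an `(n + n', m·m')`
local PMF for `k`-cycles over `F_p`. -/
theorem stmt_12 (k p n n' m m' : ℕ) (hk : 3 ≤ k) (hp : p.Prime)
    (x : Fin m → Fin k → Fin n → ZMod p)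
    (hxsum : ∀ i, ∑ j, x i j = 0)
    (hxpmf : ∀ idx : Fin k → Fin m, ∑ j, x (idx j) j = 0 → ∀ a b, idx a = idx b)
    (y : Fin m' → Fin k → Fin n' → ZMod p)
    (hysum : ∀ i, ∑ j, y i j = 0)
    (hypmf : ∀ idx : Fin k → Fin m', ∑ j, y (idx j) j = 0 → ∀ a b, idx a = idx b) :
    ∃ z : Fin (m * m') → Fin k → Fin (n + n') → ZMod p,
      (∀ i, ∑ j, z i j = 0) ∧
      ∀ idx : Fin k → Fin (m * m'), ∑ j, z (idx j) j = 0 → ∀ a b, idx a = idx b :=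
  stmt_12_general k p n n' m m' x hxsum hxpmf y hysum hypmf
end

section
/- Let n be a positive integer, k ≥ 3 an integer, and p a prime that does not divide k. Given functions f_1, ..., f_k : F_p^n → {0,1}, define f : F_p^{n+k-1} → {0,1} by f(y, z) = f_i(y) if z = e_i for some 1 ≤ i ≤ k−1, f(y, z) = f_k(y) if z = −e_1−...−e_{k−1}, and f(y, z) = 0 otherwise, where e_i ∈ F_p^{k−1} is the i-th standard basis vector. If the tuple (f_1, ..., f_k) is ε_1-far from k-cycle-freeness, then the single function f is ε_2-far from k-cycle-freeness for ε_2 = ε_1/p^{k−1}. -/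
/-- Let `k ≥ 3` and `p` a prime not dividing `k`. Given
`f_1, ..., f_k : F_p^n → {0,1}`, define `f : F_p^{n+k-1} → {0,1}` by
`f(y, e_i) = f_i(y)` for `1 ≤ i ≤ k-1`, `f(y, -e_1-⋯-e_{k-1}) = f_k(y)`, and
`f(y, z) = 0` otherwise. If `(f_1, ..., f_k)` is `ε₁`-far from
`k`-cycle-freeness, then `f` is `(ε₁/p^{k-1})`-far from `k`-cycle-freeness.
Here `e 0, ..., e (k-2)` are the standard basis vectors of `F_p^{k-1}` and
`e (k-1) = -(e_1 + ⋯ + e_{k-1})`. -/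
theorem stmt_13 (n k p : ℕ) [Fact p.Prime] (hn : 1 ≤ n) (hk : 3 ≤ k)
    (hpk : ¬ p ∣ k)
    (f : Fin k → (Fin n → ZMod p) → Bool)
    (e : Fin k → Fin (k - 1) → ZMod p)
    (he1 : ∀ (j : Fin k) (h : (j : ℕ) < k - 1),
      e j = Pi.single (⟨j, h⟩ : Fin (k - 1)) 1)
    (he2 : ∀ j : Fin k, ¬ (j : ℕ) < k - 1 →
      e j = -∑ i : Fin (k - 1), Pi.single i 1)
    (F : ((Fin n → ZMod p) × (Fin (k - 1) → ZMod p)) → Bool)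
    (hF1 : ∀ (y : Fin n → ZMod p) (j : Fin k), F (y, e j) = f j y)
    (hF2 : ∀ (y : Fin n → ZMod p) (z : Fin (k - 1) → ZMod p),
      (∀ j, z ≠ e j) → F (y, z) = false)
    (ε₁ : ℝ)
    (hfar : ∀ g : Fin k → (Fin n → ZMod p) → Bool,
      (¬ ∃ w : Fin k → Fin n → ZMod p, (∑ j, w j = 0) ∧ ∀ j, g j (w j) = true) →
      ε₁ ≤ ∑ j, ((Finset.univ.filter fun v => f j v ≠ g j v).card : ℝ) / (p ^ n : ℝ)) :
    ∀ G : ((Fin n → ZMod p) × (Fin (k - 1) → ZMod p)) → Bool,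
      (¬ ∃ w : Fin k → ((Fin n → ZMod p) × (Fin (k - 1) → ZMod p)),
        (∑ j, w j = 0) ∧ ∀ j, G (w j) = true) →
      ε₁ / (p ^ (k - 1) : ℝ) ≤
        ((Finset.univ.filter fun w => F w ≠ G w).card : ℝ) / (p ^ (n + k - 1) : ℝ) := by
  intro G hG
  obtain ⟨m, rfl⟩ : ∃ m, k = m + 1 := ⟨k - 1, (Nat.succ_pred_eq_of_pos (by omega)).symm⟩
  have hm : 2 ≤ m := by omega
  have hppos : (0:ℝ) < (p:ℝ) := by exact_mod_cast (Fact.out : p.Prime).pos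
  -- the sum of all e j is zero
  have hesum : ∑ j : Fin (m+1), e j = 0 := by
    rw [Fin.sum_univ_castSucc]
    have h2 : e (Fin.last m) = -∑ i : Fin (m+1-1), Pi.single i (1:ZMod p) :=
      he2 _ (by simp)
    have h3 : ∑ i : Fin m, e i.castSucc
        = ∑ i : Fin (m+1-1), (Pi.single i 1 : Fin (m+1-1) → ZMod p) := by
      apply Fintype.sum_equiv (finCongr (rfl : m = m + 1 - 1))
      intro i
      rw [he1 i.castSucc (by simpa using i.isLt)]
      congr 1
    rw [h2, h3]
    exact add_neg_cancel _
  -- e is injective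
  have hinj : Function.Injective e := by
    intro a b hab
    by_contra hne
    have key : ∀ j : Fin (m+1), ∑ x, e j x =
        if (j:ℕ) < m then (1 : ZMod p) else -(m : ZMod p) := by
      intro j
      by_cases hj : (j:ℕ) < m
      · rw [he1 j (by simpa using hj), if_pos hj, Finset.sum_pi_single']
        simp
      · rw [he2 j (by simpa using hj), if_neg hj]
        simp only [Pi.neg_apply, Finset.sum_neg_distrib, neg_inj, Finset.sum_apply]
        rw [Finset.sum_comm]
        simp [Finset.sum_pi_single']
    have hsum := congrArg (fun z => ∑ x, z x) hab
    simp only [key] at hsum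
    by_cases ha : (a:ℕ) < m <;> by_cases hb : (b:ℕ) < m
    · -- both basis vectors, distinct indices
      have ha' : (a:ℕ) < m + 1 - 1 := by omega
      have hb' : (b:ℕ) < m + 1 - 1 := by omega
      have hane : (⟨a, ha'⟩ : Fin (m+1-1)) ≠ ⟨b, hb'⟩ := by
        intro h
        simp only [Fin.mk.injEq] at h
        exact hne (Fin.ext h)
      have hval : (Pi.single (⟨a, ha'⟩ : Fin (m+1-1)) 1 : Fin (m+1-1) → ZMod p)
          = Pi.single ⟨b, hb'⟩ 1 := by
        rw [← he1 a ha', ← he1 b hb', hab]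
      have := congrFun hval ⟨a, ha'⟩
      rw [Pi.single_eq_same, Pi.single_eq_of_ne hane] at this
      exact one_ne_zero this
    · -- 1 = -m : p ∣ m+1
      rw [if_pos ha, if_neg hb] at hsum
      have : ((m+1 : ℕ) : ZMod p) = 0 := by push_cast; linear_combination hsum
      exact hpk ((ZMod.natCast_eq_zero_iff _ _).mp this)
    · rw [if_neg ha, if_pos hb] at hsum
      have : ((m+1 : ℕ) : ZMod p) = 0 := by push_cast; linear_combination -hsum
      exact hpk ((ZMod.natCast_eq_zero_iff _ _).mp this)
    · exact hne (Fin.ext (by omega))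
  set g : Fin (m+1) → (Fin n → ZMod p) → Bool := fun j y => G (y, e j) with hgdef
  have hgfree : ¬ ∃ w : Fin (m+1) → Fin n → ZMod p,
      (∑ j, w j = 0) ∧ ∀ j, g j (w j) = true := by
    rintro ⟨w, hw0, hw1⟩
    refine hG ⟨fun j => (w j, e j), ?_, fun j => hw1 j⟩
    have : (∑ j, ((w j, e j) : (Fin n → ZMod p) × (Fin (m+1-1) → ZMod p)))
        = (∑ j, w j, ∑ j, e j) := by
      apply Prod.ext
      · simp [Prod.fst_sum]
      · simp [Prod.snd_sum]
    rw [this, hw0, hesum]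
    rfl
  have h1 := hfar g hgfree
  set S : Fin (m+1) → Finset (Fin n → ZMod p) :=
    fun j => Finset.univ.filter fun v => f j v ≠ g j v with hS
  set T := Finset.univ.filter fun w => F w ≠ G w with hT
  have himg : ∀ j, (S j).image (fun y => (y, e j)) ⊆ T := by
    intro j x hx
    simp only [Finset.mem_image] at hx
    obtain ⟨y, hy, rfl⟩ := hx
    simp only [hS, hT, Finset.mem_filter, Finset.mem_univ, true_and] at hy ⊢
    rw [hF1]
    exact hy
  have hcard : ∑ j, (S j).card ≤ T.card := by
    have hdisj : ∀ a ∈ (Finset.univ : Finset (Fin (m+1))), ∀ b ∈ Finset.univ, a ≠ b →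
        Disjoint ((S a).image (fun y => (y, e a))) ((S b).image (fun y => (y, e b))) := by
      intro a _ b _ hab
      rw [Finset.disjoint_left]
      intro x hxa hxb
      simp only [Finset.mem_image] at hxa hxb
      obtain ⟨y, _, rfl⟩ := hxa
      obtain ⟨y', _, h⟩ := hxb
      exact hab (hinj (congrArg Prod.snd h)).symm
    calc ∑ j, (S j).card
        = ∑ j, ((S j).image (fun y => (y, e j))).card := by
          refine Finset.sum_congr rfl fun j _ => ?_
          rw [Finset.card_image_of_injective _ (fun y y' h => congrArg Prod.fst h)]
      _ = (Finset.univ.biUnion fun j => (S j).image (fun y => (y, e j))).card :=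
          (Finset.card_biUnion hdisj).symm
      _ ≤ T.card := Finset.card_le_card (by
          intro x hx
          simp only [Finset.mem_biUnion] at hx
          obtain ⟨j, _, hj⟩ := hx
          exact himg j hj)
  have hcardR : (∑ j, ((S j).card : ℝ)) ≤ (T.card : ℝ) := by
    exact_mod_cast (Nat.cast_le.mpr hcard).trans_eq (by push_cast; ring)
  have h2 : ε₁ ≤ (T.card : ℝ) / (p:ℝ) ^ n := by
    refine h1.trans ?_
    rw [← Finset.sum_div]
    exact div_le_div_of_nonneg_right hcardR (pow_pos hppos n).le
  have hgoal : ε₁ / (p:ℝ) ^ m ≤ ((T.card : ℝ) / (p:ℝ) ^ n) / (p:ℝ) ^ m :=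
    div_le_div_of_nonneg_right h2 (pow_pos hppos m).le
  calc ε₁ / ((p:ℝ) ^ (m+1-1)) = ε₁ / (p:ℝ) ^ m := rfl
    _ ≤ ((T.card : ℝ) / (p:ℝ) ^ n) / (p:ℝ) ^ m := hgoal
    _ = (T.card : ℝ) / (p:ℝ) ^ (n + (m+1) - 1) := by
        rw [div_div, ← pow_add]
        norm_num
end

section
/- Let p be a prime and k ≥ 3 an integer such that p does not divide k. In F_p^{k−1}, let S = {e_1, ..., e_{k−1}, s} where e_i is the i-th standard basis vector and s = −(e_1 + ... + e_{k−1}). If v_1, ..., v_k is any sequence of k elements of S (repetitions allowed) with v_1 + v_2 + ... + v_k = 0, then each of the k elements of S appears exactly once among v_1, ..., v_k. -/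
/-- Let `p` be a prime not dividing `k`, `k ≥ 3`. In `F_p^{k-1}`
let `S = {e_1, ..., e_{k-1}, s}` with `s = -(e_1 + ⋯ + e_{k-1})`. If
`v_1, ..., v_k ∈ S` (with repetition) satisfy `v_1 + ⋯ + v_k = 0`, then each
element of `S` appears exactly once among `v_1, ..., v_k`. -/
theorem stmt_14 (p k : ℕ) (hp : p.Prime) (hk : 3 ≤ k) (hpk : ¬ p ∣ k)
    (v : Fin k → Fin (k - 1) → ZMod p)
    (hv : ∀ j, (∃ i : Fin (k - 1), v j = Pi.single i 1) ∨
      v j = -∑ i : Fin (k - 1), Pi.single i 1)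
    (hsum : ∑ j, v j = 0) :
    ∀ a : Fin (k - 1) → ZMod p,
      ((∃ i : Fin (k - 1), a = Pi.single i 1) ∨
        a = -∑ i : Fin (k - 1), Pi.single i 1) →
      ∃! j : Fin k, v j = a := by
  classical
  haveI : Fact p.Prime := ⟨hp⟩
  have hn2 : 2 ≤ k - 1 := by omega
  have hkn : k - 1 + 1 = k := by omega
  haveI : Nontrivial (Fin (k - 1)) := Fin.nontrivial_iff_two_le.mpr hn2
  set s : Fin (k - 1) → ZMod p := -∑ i : Fin (k - 1), Pi.single i 1 with hsdef
  have hs_apply : ∀ i0 : Fin (k - 1), s i0 = -1 := by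
    intro i0
    simp [hsdef, Finset.sum_apply, Pi.single_apply]
  have hes : ∀ i : Fin (k - 1), (Pi.single i 1 : Fin (k - 1) → ZMod p) ≠ s := by
    intro i h
    obtain ⟨i', hi'⟩ := exists_ne i
    have h2 := congrFun h i'
    rw [Pi.single_eq_of_ne hi', hs_apply] at h2
    exact one_ne_zero (neg_eq_zero.mp h2.symm)
  have hee : ∀ i i' : Fin (k - 1),
      (Pi.single i 1 : Fin (k - 1) → ZMod p) = Pi.single i' 1 → i = i' := by
    intro i i' h
    by_contra hne
    have h2 := congrFun h i
    rw [Pi.single_eq_same, Pi.single_eq_of_ne hne] at h2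
    exact one_ne_zero h2
  set cnt : (Fin (k - 1) → ZMod p) → ℕ :=
    fun a => (Finset.univ.filter (fun j => v j = a)).card with hcnt
  have hcard : ∀ a : Fin (k - 1) → ZMod p,
      cnt a = ∑ j : Fin k, if v j = a then 1 else 0 :=
    fun a => Finset.card_filter _ _
  -- Step A: coordinatewise count equality mod p
  have stepA : ∀ i0 : Fin (k - 1), (cnt (Pi.single i0 1) : ZMod p) = (cnt s : ZMod p) := by
    intro i0
    have h0 : ∑ j, v j i0 = 0 := by
      have := congrFun hsum i0
      simpa [Finset.sum_apply] using this
    have h1 : ∀ j, v j i0 = (if v j = Pi.single i0 1 then (1 : ZMod p) else 0)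
        - (if v j = s then 1 else 0) := by
      intro j
      rcases hv j with ⟨i, hi⟩ | hj
      · rw [hi]
        by_cases hii : i = i0
        · subst hii
          simp [hes i]
        · have h2 : (Pi.single i 1 : Fin (k - 1) → ZMod p) ≠ Pi.single i0 1 :=
            fun h => hii (hee _ _ h)
          rw [Pi.single_eq_of_ne (Ne.symm hii)]
          simp [h2, hes i]
      · rw [hj, hs_apply]
        have h3 : s ≠ (Pi.single i0 1 : Fin (k - 1) → ZMod p) := Ne.symm (hes i0)
        simp [h3]
    rw [Finset.sum_congr rfl (fun j _ => h1 j), Finset.sum_sub_distrib,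
      Finset.sum_boole, Finset.sum_boole] at h0
    have := sub_eq_zero.mp h0
    simpa [hcnt] using this
  -- Step B: counts partition k
  have stepB : (∑ i : Fin (k - 1), cnt (Pi.single i 1)) + cnt s = k := by
    have h1 : ∀ j : Fin k,
        (∑ i : Fin (k - 1), if v j = Pi.single i 1 then (1 : ℕ) else 0)
          + (if v j = s then 1 else 0) = 1 := by
      intro j
      rcases hv j with ⟨i, hi⟩ | hj
      · rw [hi]
        have h2 : ∀ i' : Fin (k - 1),
            (if (Pi.single i 1 : Fin (k - 1) → ZMod p) = Pi.single i' 1 then (1 : ℕ) else 0)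
              = if i = i' then 1 else 0 := by
          intro i'
          by_cases h : i = i'
          · subst h; simp
          · rw [if_neg h, if_neg (fun hh => h (hee _ _ hh))]
        rw [Finset.sum_congr rfl (fun i' _ => h2 i'), Finset.sum_ite_eq]
        simp [hes i]
      · rw [hj]
        rw [Finset.sum_eq_zero]
        · simp
        · intro i _
          exact if_neg (Ne.symm (hes i))
    calc (∑ i : Fin (k - 1), cnt (Pi.single i 1)) + cnt s
        = ∑ j : Fin k, ((∑ i : Fin (k - 1), if v j = Pi.single i 1 then (1 : ℕ) else 0)
            + (if v j = s then 1 else 0)) := by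
          rw [Finset.sum_add_distrib, ← Finset.sum_comm, ← hcard s,
            Finset.sum_congr rfl (fun i (_ : i ∈ Finset.univ) => (hcard (Pi.single i 1)).symm)]
      _ = ∑ _j : Fin k, 1 := Finset.sum_congr rfl (fun j _ => h1 j)
      _ = k := by simp
  -- Step C: cnt s = 1 mod p
  have hkz : (k : ZMod p) ≠ 0 := by
    simpa [ZMod.natCast_eq_zero_iff] using hpk
  have hms : (cnt s : ZMod p) = 1 := by
    have hB : ((∑ i : Fin (k - 1), cnt (Pi.single i 1) : ℕ) : ZMod p) + (cnt s : ZMod p)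
        = (k : ZMod p) := by exact_mod_cast congrArg (Nat.cast : ℕ → ZMod p) stepB
    rw [Nat.cast_sum, Finset.sum_congr rfl (fun i _ => stepA i), Finset.sum_const,
      Finset.card_univ, Fintype.card_fin, nsmul_eq_mul] at hB
    have hnk : ((k - 1 : ℕ) : ZMod p) + 1 = (k : ZMod p) := by
      rw [← hkn]; push_cast; rfl
    have hB2 : (k : ZMod p) * (cnt s : ZMod p) = (k : ZMod p) * 1 := by
      linear_combination hB - (cnt s : ZMod p) * hnk
    exact mul_left_cancel₀ hkz hB2
  have hpos : ∀ a : Fin (k - 1) → ZMod p, (cnt a : ZMod p) = 1 → 1 ≤ cnt a := by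
    intro a h
    rcases Nat.eq_zero_or_pos (cnt a) with h0 | h0
    · rw [h0] at h; norm_num at h
    · exact h0
  have hms1 : 1 ≤ cnt s := hpos s hms
  have hce1 : ∀ i : Fin (k - 1), 1 ≤ cnt (Pi.single i 1) :=
    fun i => hpos _ ((stepA i).trans hms)
  have hsn : k - 1 ≤ ∑ i : Fin (k - 1), cnt (Pi.single i 1) := by
    calc k - 1 = ∑ _i : Fin (k - 1), 1 := by simp
    _ ≤ ∑ i : Fin (k - 1), cnt (Pi.single i 1) := Finset.sum_le_sum (fun i _ => hce1 i)
  have hcs : cnt s = 1 := by omega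
  have hce : ∀ i : Fin (k - 1), cnt (Pi.single i 1) = 1 := by
    intro i0
    have h1 : ∑ i : Fin (k - 1), cnt (Pi.single i 1)
        = cnt (Pi.single i0 1) + ∑ i ∈ Finset.univ.erase i0, cnt (Pi.single i 1) :=
      (Finset.add_sum_erase _ _ (Finset.mem_univ i0)).symm
    have h2 : (Finset.univ.erase i0).card • 1
        ≤ ∑ i ∈ Finset.univ.erase i0, cnt (Pi.single i 1) :=
      Finset.card_nsmul_le_sum _ _ _ (fun i _ => hce1 i)
    have h3 : (Finset.univ.erase i0).card = k - 1 - 1 := by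
      rw [Finset.card_erase_of_mem (Finset.mem_univ i0)]
      simp
    rw [h3, smul_eq_mul, mul_one] at h2
    have h4 := hce1 i0
    omega
  -- conclude
  intro a ha
  have hca : cnt a = 1 := by
    rcases ha with ⟨i, rfl⟩ | rfl
    · exact hce i
    · exact hcs
  obtain ⟨j0, hj0⟩ := Finset.card_eq_one.mp hca
  refine ⟨j0, ?_, ?_⟩
  · have hmem : j0 ∈ Finset.univ.filter (fun j => v j = a) := by
      rw [hj0]; exact Finset.mem_singleton_self j0
    exact (Finset.mem_filter.mp hmem).2
  · intro j hj
    have hmem : j ∈ Finset.univ.filter (fun j => v j = a) :=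
      Finset.mem_filter.mpr ⟨Finset.mem_univ _, hj⟩
    rw [hj0, Finset.mem_singleton] at hmem
    exact hmem
end

section
/- Let k ≥ 3 be an integer, p a prime, and n > n_0 positive integers. Given functions f_1, ..., f_k : F_p^{n_0} → {0,1} whose tuple is ε-far from k-cycle-freeness, define g_1, ..., g_k : F_p^n → {0,1} by g_j(x, z) = 1 if and only if f_j(x) = 1 and Σ_{i=1}^{n−n_0} z_i = 0, for x ∈ F_p^{n_0} and z ∈ F_p^{n−n_0}. Then the tuple (g_1, ..., g_k) is (ε/p)-far from k-cycle-freeness. -/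
/-!
Fix a cycle-free tuple `G` on `𝔽_p^{n₀} × 𝔽_p^{n-n₀}` and let `S` be the hyperplane `∑ zᵢ = 0`.
For every zero-sum tuple `z` in `S^k`, the slices `a ↦ G j (a, z j)` form a cycle-free tuple on
`𝔽_p^{n₀}`, and on these slices `g j` coincides with `f j`; so each such `z` costs at least
`ε p^{n₀}` disagreements. The zero-sum tuples `(-(t₁ + ⋯ + t_{k-1}), t₁, …, t_{k-1})` have
uniformly distributed coordinates, so averaging over them bounds the total number of
disagreements of `g` and `G` on `𝔽_p^{n₀} × S` from below by `ε p^{n₀} |S| = ε p^{n-1}`.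
-/

open Finset

section ZeroSumTuples

variable {M R : Type*} [AddCommGroup M] [Fintype M] {K : ℕ}

theorem sum_comp_neg_sum [AddCommMonoid R] (F : M → R) :
    ∑ t : Fin (K + 1) → M, F (-∑ i, t i) = Fintype.card M ^ K • ∑ a, F a := by
  calc ∑ t : Fin (K + 1) → M, F (-∑ i, t i)
      = ∑ s : Fin K → M, ∑ a, F (-(a + ∑ i, s i)) := by
        rw [← (Fin.consEquiv fun _ => M).sum_comp, Fintype.sum_prod_type_right]
        simp [Fin.consEquiv, Fin.sum_cons]
    _ = ∑ _s : Fin K → M, ∑ a, F a := by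
        refine sum_congr rfl fun s _ => ?_
        exact ((Equiv.addRight _).trans (Equiv.neg M)).sum_comp F
    _ = Fintype.card M ^ K • ∑ a, F a := by simp

theorem sum_comp_cons_neg_sum [AddCommMonoid R] (F : M → R) (j : Fin (K + 2)) :
    ∑ t : Fin (K + 1) → M, F ((Fin.cons (-∑ i, t i) t : Fin (K + 2) → M) j) =
      Fintype.card M ^ K • ∑ a, F a := by
  cases j using Fin.cases with
  | zero => simpa using sum_comp_neg_sum F
  | succ i => simpa using Fintype.sum_piFinset_apply F univ i

theorem mul_card_le_sum_sum_of_forall_sum_eq_zero [CommRing R] [LinearOrder R]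
    [IsStrictOrderedRing R] (φ : Fin (K + 2) → M → R) (c : R)
    (h : ∀ z : Fin (K + 2) → M, ∑ j, z j = 0 → c ≤ ∑ j, φ j (z j)) :
    c * Fintype.card M ≤ ∑ j, ∑ a, φ j a := by
  have hpos : (0 : R) < (Fintype.card M : R) ^ K := by positivity
  refine le_of_mul_le_mul_left ?_ hpos
  calc (Fintype.card M : R) ^ K * (c * Fintype.card M)
      = ∑ _t : Fin (K + 1) → M, c := by simp; ring
    _ ≤ ∑ t : Fin (K + 1) → M, ∑ j, φ j ((Fin.cons (-∑ i, t i) t : Fin (K + 2) → M) j) :=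
        sum_le_sum fun t _ => h _ (by simp [Fin.sum_cons])
    _ = ∑ j, Fintype.card M ^ K • ∑ a, φ j a := by
        rw [sum_comm]; simp only [sum_comp_cons_neg_sum]
    _ = (Fintype.card M : R) ^ K * ∑ j, ∑ a, φ j a := by simp [mul_sum]

end ZeroSumTuples

def IsCycleFree {k : ℕ} {M : Type*} [AddCommMonoid M] (f : Fin k → M → Bool) : Prop :=
  ¬ ∃ x : Fin k → M, ∑ j, x j = 0 ∧ ∀ j, f j (x j) = true

theorem IsCycleFree.slice {k : ℕ} {A B : Type*} [AddCommMonoid A] [AddCommMonoid B]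
    {G : Fin k → A × B → Bool} (hG : IsCycleFree G) {z : Fin k → B} (hz : ∑ j, z j = 0) :
    IsCycleFree fun j a => G j (a, z j) := by
  rintro ⟨x, hx, hGx⟩
  exact hG ⟨fun j => (x j, z j), by simp [Prod.ext_iff, Prod.fst_sum, Prod.snd_sum, hx, hz], hGx⟩

section Hamming

variable {A B β : Type*} [Fintype A] [Fintype B] [DecidableEq β]

theorem hammingDist_prod_eq_sum (φ ψ : A × B → β) :
    hammingDist φ ψ = ∑ b, hammingDist (fun a => φ (a, b)) (fun a => ψ (a, b)) := by
  simp only [hammingDist, card_filter]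
  exact Fintype.sum_prod_type_right _

theorem sum_hammingDist_comp_le {C : Type*} [Fintype C] {ι : C → B} (hι : Function.Injective ι)
    (φ ψ : A × B → β) :
    ∑ c, hammingDist (fun a => φ (a, ι c)) (fun a => ψ (a, ι c)) ≤ hammingDist φ ψ := by
  set d : B → ℕ := fun b => hammingDist (fun a => φ (a, b)) (fun a => ψ (a, b))
  calc ∑ c, d (ι c) = ∑ b ∈ univ.map ⟨ι, hι⟩, d b := (sum_map univ ⟨ι, hι⟩ d).symm
    _ ≤ ∑ b, d b := sum_le_sum_of_subset (subset_univ _)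
    _ = hammingDist φ ψ := (hammingDist_prod_eq_sum φ ψ).symm

end Hamming

theorem mul_card_le_sum_hammingDist {A B R : Type*} [AddCommMonoid A] [Fintype A]
    [AddCommGroup B] [Fintype B] [CommRing R] [LinearOrder R] [IsStrictOrderedRing R] {K : ℕ}
    (S : AddSubgroup B) [Fintype S] {f : Fin (K + 2) → A → Bool}
    {g G : Fin (K + 2) → A × B → Bool} {c : R}
    (hf : ∀ h, IsCycleFree h → c ≤ ∑ j, (hammingDist (f j) (h j) : R))
    (hg : ∀ j a, ∀ z ∈ S, g j (a, z) = f j a) (hG : IsCycleFree G) :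
    c * Fintype.card S ≤ ∑ j, (hammingDist (g j) (G j) : R) := by
  set φ : Fin (K + 2) → S → R :=
    fun j z => hammingDist (fun a => g j (a, z)) (fun a => G j (a, z))
  have hφ : ∀ z : Fin (K + 2) → S, ∑ j, z j = 0 → c ≤ ∑ j, φ j (z j) := by
    intro z hz
    have hzB : ∑ j, (z j : B) = 0 := by simpa using congrArg Subtype.val hz
    refine (hf _ (hG.slice hzB)).trans_eq (sum_congr rfl fun j _ => ?_)
    have hgf : (fun a => g j (a, z j)) = f j := funext fun a => hg j a _ (z j).2
    simp only [φ, hgf]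
  calc c * Fintype.card S ≤ ∑ j, ∑ z, φ j z := mul_card_le_sum_sum_of_forall_sum_eq_zero φ c hφ
    _ ≤ ∑ j, (hammingDist (g j) (G j) : R) := by
        gcongr with j
        simp only [φ]
        exact_mod_cast sum_hammingDist_comp_le Subtype.val_injective (g j) (G j)

theorem AddMonoidHom.card_ker_mul_card {G H : Type*} [AddGroup G] [AddGroup H] {f : G →+ H}
    (hf : Function.Surjective f) : Nat.card f.ker * Nat.card H = Nat.card G := by
  rw [← f.ker.card_mul_index, AddSubgroup.index_ker, f.range_eq_top.mpr hf, AddSubgroup.card_top]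

theorem stmt_16_general (k p n n₀ : ℕ) [Fact p.Prime] (hk : 3 ≤ k)
    (hn : n₀ < n)
    (f : Fin k → (Fin n₀ → ZMod p) → Bool) (ε : ℝ)
    (hfar : ∀ g : Fin k → (Fin n₀ → ZMod p) → Bool,
      (¬ ∃ x : Fin k → Fin n₀ → ZMod p, (∑ j, x j = 0) ∧ ∀ j, g j (x j) = true) →
      ε ≤ ∑ j, ((Finset.univ.filter fun v => f j v ≠ g j v).card : ℝ) / (p ^ n₀ : ℝ))
    (g : Fin k → ((Fin n₀ → ZMod p) × (Fin (n - n₀) → ZMod p)) → Bool)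
    (hg : ∀ (j : Fin k) (x : Fin n₀ → ZMod p) (z : Fin (n - n₀) → ZMod p),
      g j (x, z) = true ↔ (f j x = true ∧ ∑ i, z i = 0)) :
    ∀ G : Fin k → ((Fin n₀ → ZMod p) × (Fin (n - n₀) → ZMod p)) → Bool,
      (¬ ∃ x : Fin k → ((Fin n₀ → ZMod p) × (Fin (n - n₀) → ZMod p)),
        (∑ j, x j = 0) ∧ ∀ j, G j (x j) = true) →
      ε / (p : ℝ) ≤
        ∑ j, ((Finset.univ.filter fun w => g j w ≠ G j w).card : ℝ) / (p ^ n : ℝ) := by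
  intro G hG
  obtain ⟨K, rfl⟩ : ∃ K, k = K + 2 := ⟨k - 2, by omega⟩
  let σ : (Fin (n - n₀) → ZMod p) →+ ZMod p :=
    AddMonoidHom.mk' (fun z => ∑ i, z i) fun _ _ => sum_add_distrib
  have hσ : Function.Surjective σ := fun a => ⟨Pi.single ⟨0, by omega⟩ a, by simp [σ]⟩
  have hp : (0 : ℝ) < p := by exact_mod_cast (Fact.out : p.Prime).pos
  have hker : (Fintype.card σ.ker : ℝ) * p = (p : ℝ) ^ (n - n₀) := by
    have := σ.card_ker_mul_card hσ
    simp only [Nat.card_eq_fintype_card, ZMod.card, Fintype.card_fun, Fintype.card_fin] at this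
    exact_mod_cast this
  -- `hfar` is stated with `hammingDist` unfolded to the cardinality of a filter.
  have hlift := mul_card_le_sum_hammingDist σ.ker (c := ε * p ^ n₀)
    (fun h hh => (le_div_iff₀ (by positivity)).mp ((hfar h hh).trans_eq (sum_div ..).symm))
    (fun j a z hz => Bool.eq_iff_iff.mpr ((hg j a z).trans (and_iff_left hz))) hG
  rw [← sum_div, div_le_div_iff₀ hp (by positivity)]
  calc ε * (p : ℝ) ^ n = ε * p ^ n₀ * (Fintype.card σ.ker * p) := by
        rw [hker, mul_assoc, ← pow_add, Nat.add_sub_cancel' hn.le]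
    _ ≤ _ := by rw [← mul_assoc]; exact mul_le_mul_of_nonneg_right hlift hp.le

/-- Let `k ≥ 3`, `p` prime, `n > n₀ ≥ 1`. Given
`f_1, ..., f_k : F_p^{n₀} → {0,1}` whose tuple is `ε`-far from
`k`-cycle-freeness, define `g_j : F_p^n → {0,1}` by `g_j(x, z) = 1` iff
`f_j(x) = 1` and `∑ z_i = 0`. Then `(g_1, ..., g_k)` is `(ε/p)`-far from
`k`-cycle-freeness. -/
theorem stmt_16 (k p n n₀ : ℕ) [Fact p.Prime] (hk : 3 ≤ k)
    (hn₀ : 1 ≤ n₀) (hn : n₀ < n)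
    (f : Fin k → (Fin n₀ → ZMod p) → Bool) (ε : ℝ)
    (hfar : ∀ g : Fin k → (Fin n₀ → ZMod p) → Bool,
      (¬ ∃ x : Fin k → Fin n₀ → ZMod p, (∑ j, x j = 0) ∧ ∀ j, g j (x j) = true) →
      ε ≤ ∑ j, ((Finset.univ.filter fun v => f j v ≠ g j v).card : ℝ) / (p ^ n₀ : ℝ))
    (g : Fin k → ((Fin n₀ → ZMod p) × (Fin (n - n₀) → ZMod p)) → Bool)
    (hg : ∀ (j : Fin k) (x : Fin n₀ → ZMod p) (z : Fin (n - n₀) → ZMod p),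
      g j (x, z) = true ↔ (f j x = true ∧ ∑ i, z i = 0)) :
    ∀ G : Fin k → ((Fin n₀ → ZMod p) × (Fin (n - n₀) → ZMod p)) → Bool,
      (¬ ∃ x : Fin k → ((Fin n₀ → ZMod p) × (Fin (n - n₀) → ZMod p)),
        (∑ j, x j = 0) ∧ ∀ j, G j (x j) = true) →
      ε / (p : ℝ) ≤
        ∑ j, ((Finset.univ.filter fun w => g j w ≠ G j w).card : ℝ) / (p ^ n : ℝ) :=
  stmt_16_general k p n n₀ hk hn f ε hfar g hg
end

section
/- For every fixed integer r ≥ 2 and every positive integer m, there exists a set B ⊆ {1, ..., m} of size |B| ≥ m / e^{10√(log m · log r)} that contains no non-trivial solution to the equation x_1 + x_2 + ... + x_r = r·x_{r+1}; that is, whenever x_1, ..., x_{r+1} ∈ B satisfy this equation, all of x_1, ..., x_{r+1} are equal. -/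
/-!
Behrend's construction. Points of the box `[0, K)ⁿ` lying on a common sphere contain no vector
that is the mean of `r` of them unless all coincide, by strict convexity of the Euclidean norm,
and by pigeonhole some sphere carries a `1 / (n K²)` fraction of the box. Reading the points as
base-`d` digit strings with `r (K - 1) < d` produces no carries in a sum of `r` of them, so the
property passes to a set of integers below `dⁿ ≤ m`. With `n ≈ √(log m / log r)` the losses
`(2r)ⁿ` and `n K²` are both `e^{O(√(log m log r))}`.
-/

open Finset Real

def AverageFree (r : ℕ) (B : Finset ℕ) : Prop :=
  ∀ (x : Fin r → ℕ) (y : ℕ), (∀ i, x i ∈ B) → y ∈ B → ∑ i, x i = r * y → ∀ i, x i = y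

lemma averageFree_singleton (r a : ℕ) : AverageFree r {a} := by
  intro x y hx hy _ i
  rw [mem_singleton.1 (hx i), mem_singleton.1 hy]

lemma AverageFree.image_add_right {r : ℕ} {B : Finset ℕ} (hB : AverageFree r B) (c : ℕ) :
    AverageFree r (B.image (· + c)) := by
  intro x y hx hy hxy
  choose x' hx' hxx' using fun i => mem_image.1 (hx i)
  obtain ⟨y', hy', rfl⟩ := mem_image.1 hy
  have hxy' : ∑ i, x' i = r * y' := by
    simp only [← hxx', sum_add_distrib, sum_const, card_fin, smul_eq_mul, mul_add] at hxy
    omega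
  intro i
  rw [← hxx', hB x' y' hx' hy' hxy' i]

theorem eq_of_sum_eq_card_smul_of_norm_eq {ι E : Type*} [NormedAddCommGroup E]
    [InnerProductSpace ℝ E] {s : Finset ι} {a : ι → E} {b : E} (hnorm : ∀ i ∈ s, ‖a i‖ = ‖b‖)
    (hsum : ∑ i ∈ s, a i = #s • b) : ∀ i ∈ s, a i = b := by
  have hzero : ∑ i ∈ s, ‖a i - b‖ ^ 2 = 0 := calc
    ∑ i ∈ s, ‖a i - b‖ ^ 2 = ∑ i ∈ s, (2 * ‖b‖ ^ 2 - 2 * inner ℝ (a i) b) :=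
      sum_congr rfl fun i hi => by rw [norm_sub_sq_real, hnorm i hi]; ring
    _ = 2 * #s * ‖b‖ ^ 2 - 2 * inner ℝ (∑ i ∈ s, a i) b := by
      rw [sum_sub_distrib, sum_const, ← mul_sum, sum_inner, nsmul_eq_mul]; ring
    _ = 0 := by
      rw [hsum, ← Nat.cast_smul_eq_nsmul ℝ, real_inner_smul_left, real_inner_self_eq_norm_sq]; ring
  intro i hi
  have := (sum_eq_zero_iff_of_nonneg fun j _ => sq_nonneg ‖a j - b‖).1 hzero i hi
  rwa [sq_eq_zero_iff, norm_sub_eq_zero_iff] at this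

namespace Behrend

variable {n d K k r : ℕ}

lemma map_lt_pow {x : Fin n → ℕ} (hx : x ∈ box n d) : map d x < d ^ n := by
  induction n with
  | zero => simp
  | succ n ih =>
    rw [map_succ', pow_succ]
    have h0 := mem_box.1 hx 0
    have ht := ih (x := x ∘ Fin.succ) (mem_box.2 fun i => mem_box.1 hx _)
    nlinarith

lemma sum_eq_card_nsmul_of_sum_map_eq {ι : Type*} {s : Finset ι} {a : ι → Fin n → ℕ}
    {b : Fin n → ℕ} (hK : #s * (K - 1) < d) (ha : ∀ i ∈ s, a i ∈ box n K) (hb : b ∈ box n K)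
    (h : ∑ i ∈ s, map d (a i) = #s * map d b) : ∑ i ∈ s, a i = #s • b := by
  have hle : ∀ x ∈ box n K, ∀ j, x j ≤ K - 1 := fun x hx j => Nat.le_sub_one_of_lt (mem_box.1 hx j)
  refine map_injOn (fun j => ?_) (fun j => ?_) (by rw [map_sum, map_nsmul, h, smul_eq_mul])
  · calc (∑ i ∈ s, a i) j = ∑ i ∈ s, a i j := sum_apply ..
      _ ≤ #s • (K - 1) := sum_le_card_nsmul _ _ _ fun i hi => hle _ (ha i hi) j
      _ < d := hK
  · calc (#s • b) j = #s * b j := by simp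
      _ ≤ #s * (K - 1) := Nat.mul_le_mul_left _ (hle b hb j)
      _ < d := hK

theorem averageFree_image_map_sphere (hrK : r * (K - 1) < d) :
    AverageFree r ((sphere n K k).image (map d)) := by
  intro x y hx hy hxy
  choose a ha hax using fun i => mem_image.1 (hx i)
  obtain ⟨b, hb, rfl⟩ := mem_image.1 hy
  have hsum : ∑ i, a i = r • b := by
    simpa using sum_eq_card_nsmul_of_sum_map_eq (s := univ) (by simpa using hrK)
      (fun i _ => sphere_subset_box (ha i)) (sphere_subset_box hb) (by simpa [hax] using hxy)
  let e : (Fin n → ℕ) →+ EuclideanSpace ℝ (Fin n) :=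
    { toFun := fun x => WithLp.toLp 2 (((↑) : ℕ → ℝ) ∘ x)
      map_zero' := PiLp.ext fun _ => Nat.cast_zero
      map_add' := fun _ _ => PiLp.ext fun _ => Nat.cast_add _ _ }
  have he : Function.Injective e := (WithLp.toLp_injective 2).comp Nat.cast_injective.comp_left
  have hab := eq_of_sum_eq_card_smul_of_norm_eq (s := univ) (a := fun i => e (a i)) (b := e b)
    (fun i _ => (norm_of_mem_sphere (ha i)).trans (norm_of_mem_sphere hb).symm)
    (by rw [← map_sum, hsum, map_nsmul, card_fin])
  intro i
  rw [← hax i, he (hab i (mem_univ i))]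

theorem exists_averageFree_subset_Icc (hKd : K ≤ d) (hrK : r * (K - 1) < d) :
    ∃ B : Finset ℕ, B ⊆ Icc 1 (d ^ n) ∧ ((K ^ n : ℕ) / (n * K ^ 2 : ℕ) : ℝ) ≤ #B ∧
      AverageFree r B := by
  obtain ⟨k, hk⟩ := exists_large_sphere n K
  have hbox : ∀ x ∈ sphere n K k, x ∈ box n d := fun x hx =>
    mem_box.2 fun j => (mem_box.1 (sphere_subset_box hx) j).trans_le hKd
  refine ⟨((sphere n K k).image (map d)).image (· + 1), ?_, ?_,
    (averageFree_image_map_sphere hrK).image_add_right 1⟩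
  · intro z hz
    obtain ⟨_, ⟨a, ha, rfl⟩, rfl⟩ := by simpa only [mem_image] using hz
    have := map_lt_pow (hbox a ha)
    rw [mem_Icc]
    omega
  · rw [card_image_of_injective _ (add_left_injective 1),
      card_image_of_injOn (map_injOn.mono fun x hx => mem_box.1 (hbox x (mem_coe.1 hx)))]
    exact hk

end Behrend

lemma exists_pow_le_lt_succ_pow {n : ℕ} (hn : n ≠ 0) (m : ℕ) : ∃ d, d ^ n ≤ m ∧ m < (d + 1) ^ n := by
  classical
  have hex : ∃ d, m < (d + 1) ^ n := ⟨m, (Nat.lt_succ_self m).trans_le (Nat.le_self_pow hn _)⟩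
  refine ⟨Nat.find hex, ?_, Nat.find_spec hex⟩
  cases h : Nat.find hex with
  | zero => simp [zero_pow hn]
  | succ e => simpa using Nat.find_min hex (h ▸ Nat.lt_succ_self e)

lemma exists_mul_pred_lt_le_mul {r d : ℕ} (hr : 0 < r) (hd : 0 < d) :
    ∃ K, r * (K - 1) < d ∧ d ≤ r * K := by
  obtain ⟨c, rfl⟩ := Nat.exists_eq_add_one_of_ne_zero hd.ne'
  exact ⟨c / r + 1, by simpa using (Nat.mul_div_le c r).trans_lt c.lt_succ_self,
    Nat.lt_mul_div_succ c hr⟩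

lemma mul_le_pow_mul_pow_of_lt_succ_pow {r d K m n : ℕ} (hr : 2 ≤ r) (hd : 0 < d)
    (hdK : d ≤ r * K) (hm : m < (d + 1) ^ n) : m * n ≤ r ^ (3 * n) * K ^ n :=
  calc m * n ≤ (r * r * K) ^ n * r ^ n :=
        Nat.mul_le_mul (hm.le.trans (Nat.pow_le_pow_left (by nlinarith) n))
          (Nat.lt_two_pow_self.le.trans (Nat.pow_le_pow_left hr n))
    _ = r ^ (3 * n) * K ^ n := by ring

lemma exists_base_and_digit_bound {r m n : ℕ} (hr : 2 ≤ r) (hm : 1 ≤ m) (hn : n ≠ 0) :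
    ∃ d K, d ^ n ≤ m ∧ 0 < K ∧ K ≤ d ∧ r * (K - 1) < d ∧ m * n ≤ r ^ (3 * n) * K ^ n := by
  obtain ⟨d, hdm, hmd⟩ := exists_pow_le_lt_succ_pow hn m
  have hd : 0 < d := Nat.pos_of_ne_zero fun h => by simp [h] at hmd; omega
  obtain ⟨K, hrK, hdK⟩ := exists_mul_pred_lt_le_mul (r := r) (by omega) hd
  have hKd : K ≤ d := by
    have := Nat.le_mul_of_pos_left (K - 1) (by omega : 0 < r)
    omega
  exact ⟨d, K, hdm, by nlinarith, hKd, hrK, mul_le_pow_mul_pow_of_lt_succ_pow hr hd hdK hmd⟩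

lemma sqrt_div_mul_self {L R : ℝ} (hR : 0 < R) : √(L / R) * R = √(L * R) := by
  rw [← sqrt_sq hR.le, ← sqrt_mul' _ (sq_nonneg R), sqrt_sq hR.le]
  congr 1
  field_simp

lemma ceil_sqrt_div_pos {L R : ℝ} (hR : 0 < R) (hRL : R ≤ L) : 0 < ⌈√(L / R)⌉₊ :=
  Nat.ceil_pos.2 (sqrt_pos.2 (div_pos (hR.trans_le hRL) hR))

lemma ceil_sqrt_div_mul_le {L R : ℝ} (hR : 0 < R) (hRL : R ≤ L) :
    ⌈√(L / R)⌉₊ * R ≤ 2 * √(L * R) := by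
  have hs : 1 ≤ √(L / R) := one_le_sqrt.2 ((one_le_div hR).2 hRL)
  have hn : (⌈√(L / R)⌉₊ : ℝ) ≤ 2 * √(L / R) := by linarith [Nat.ceil_lt_add_one (zero_le_one.trans hs)]
  calc ⌈√(L / R)⌉₊ * R ≤ 2 * √(L / R) * R := by gcongr
    _ = 2 * √(L * R) := by rw [mul_assoc, sqrt_div_mul_self hR]

lemma le_ceil_sqrt_div_mul {L R : ℝ} (hL : 0 ≤ L) (hR : 0 < R) : L ≤ ⌈√(L / R)⌉₊ * √(L * R) :=
  calc L = √(L / R) * √(L * R) := by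
        rw [← sqrt_mul (div_nonneg hL hR.le), show L / R * (L * R) = L * L by field_simp,
          sqrt_mul_self hL]
    _ ≤ ⌈√(L / R)⌉₊ * √(L * R) := by gcongr; exact Nat.le_ceil _

lemma cast_le_exp_of_le {r m : ℕ} (hm : 1 ≤ m) (hmr : m ≤ r) :
    (m : ℝ) ≤ exp (10 * √(log m * log r)) := by
  have hL : 0 ≤ log m := log_nonneg (by exact_mod_cast hm)
  have hLR : log m ≤ √(log m * log r) := calc
    log m = √(log m * log m) := (sqrt_mul_self hL).symm
    _ ≤ √(log m * log r) :=
      sqrt_le_sqrt (mul_le_mul_of_nonneg_left (log_le_log (by positivity) (by exact_mod_cast hmr)) hL)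
  calc (m : ℝ) = exp (log m) := (exp_log (by positivity)).symm
    _ ≤ exp (10 * √(log m * log r)) := exp_le_exp.2 (by linarith [sqrt_nonneg (log m * log r)])

lemma cast_pow_mul_sq_le_exp {r m K : ℕ} (hR : 0 < log r) (hRL : log r ≤ log m)
    (hK : K ^ ⌈√(log m / log r)⌉₊ ≤ m) :
    (r : ℝ) ^ (3 * ⌈√(log m / log r)⌉₊) * K ^ 2 ≤ exp (10 * √(log m * log r)) := by
  set n := ⌈√(log m / log r)⌉₊
  set S := √(log m * log r)
  have hr : (0 : ℝ) < r := zero_lt_one.trans ((log_pos_iff (by positivity)).1 hR)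
  have hm : (0 : ℝ) < m := zero_lt_one.trans ((log_pos_iff (by positivity)).1 (hR.trans_le hRL))
  have hrn : (r : ℝ) ^ (3 * n) ≤ exp (6 * S) := by
    rw [← exp_log hr, ← exp_nat_mul, exp_le_exp]
    push_cast
    linarith [ceil_sqrt_div_mul_le hR hRL]
  have hKS : (K : ℝ) ≤ exp S := by
    refine (pow_le_pow_iff_left₀ (Nat.cast_nonneg K) (exp_pos S).le
      (ceil_sqrt_div_pos hR hRL).ne').1 ?_
    calc (K : ℝ) ^ n ≤ m := by exact_mod_cast hK
      _ = exp (log m) := (exp_log hm).symm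
      _ ≤ exp (n * S) := exp_le_exp.2 (le_ceil_sqrt_div_mul (hR.le.trans hRL) hR)
      _ = exp S ^ n := exp_nat_mul S n
  calc (r : ℝ) ^ (3 * n) * K ^ 2 ≤ exp (6 * S) * exp S ^ 2 := by gcongr
    _ = exp (8 * S) := by rw [← exp_nat_mul, ← exp_add]; ring_nf
    _ ≤ exp (10 * S) := exp_le_exp.2 (by linarith [sqrt_nonneg (log m * log r)])

/-- For every fixed `r ≥ 2` and positive integer `m`, there exists
`B ⊆ {1, ..., m}` of size at least `m / e^{10√(log m · log r)}` with no
non-trivial solution to `x_1 + ⋯ + x_r = r·x_{r+1}`. -/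
theorem stmt_17 (r : ℕ) (hr : 2 ≤ r) (m : ℕ) (hm : 1 ≤ m) :
    ∃ B : Finset ℕ, B ⊆ Finset.Icc 1 m ∧
      (m : ℝ) / Real.exp (10 * Real.sqrt (Real.log m * Real.log r)) ≤ (B.card : ℝ) ∧
      ∀ (x : Fin r → ℕ) (y : ℕ), (∀ i, x i ∈ B) → y ∈ B →
        (∑ i, x i) = r * y → ∀ i, x i = y := by
  rcases le_or_gt m r with hmr | hrm
  · refine ⟨{m}, by simpa using hm, ?_, averageFree_singleton r m⟩
    simpa [div_le_one (exp_pos _)] using cast_le_exp_of_le hm hmr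
  have hR : 0 < log r := log_pos (by exact_mod_cast hr)
  have hRL : log r ≤ log m := log_le_log (by positivity) (by exact_mod_cast hrm.le)
  set n := ⌈√(log m / log r)⌉₊
  have hn : 0 < n := ceil_sqrt_div_pos hR hRL
  obtain ⟨d, K, hdm, hK, hKd, hrK, hmK⟩ := exists_base_and_digit_bound hr hm hn.ne'
  obtain ⟨B, hBsub, hBcard, hBfree⟩ := Behrend.exists_averageFree_subset_Icc (n := n) hKd hrK
  refine ⟨B, hBsub.trans (Icc_subset_Icc_right hdm), le_trans ?_ hBcard, hBfree⟩
  rw [div_le_div_iff₀ (exp_pos _) (by positivity)]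
  calc (m : ℝ) * ((n * K ^ 2 : ℕ) : ℝ) = ((m * n : ℕ) : ℝ) * K ^ 2 := by push_cast; ring
    _ ≤ ((r ^ (3 * n) * K ^ n : ℕ) : ℝ) * K ^ 2 := by
      gcongr ?_ * _
      exact_mod_cast hmK
    _ = ((K ^ n : ℕ) : ℝ) * ((r : ℝ) ^ (3 * n) * K ^ 2) := by push_cast; ring
    _ ≤ ((K ^ n : ℕ) : ℝ) * exp (10 * √(log m * log r)) := by
      gcongr
      exact cast_pow_mul_sq_le_exp hR hRL ((Nat.pow_le_pow_left hKd n).trans hdm)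
end

section
/- For every prime p ≥ 3 and every real ε > 0, there exists n_0 such that for every n ≥ n_0 the following holds: if A ⊆ F_p^n contains no p vectors (repetitions allowed), not all equal, whose sum is the zero vector, then |A| ≤ ε·p^n. -/
/-!
Such a set is free of non-trivial three-term progressions, so Roth's theorem for finite abelian
groups (`roth_3ap_theorem`) makes its density tend to zero.
-/

open Finset

/-- If `a + c = 2b`, the `p`-tuple `(a, c, b, …, b)` sums to `p • b = 0`. -/
theorem threeAPFree_of_forall_sum_eq_zero {G : Type*} [AddCommGroup G] {p : ℕ} (hp : 3 ≤ p)
    (hG : ∀ x : G, p • x = 0) {A : Set G}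
    (hA : ∀ x : Fin p → G, (∀ i, x i ∈ A) → ∑ i, x i = 0 → ∀ i j, x i = x j) :
    ThreeAPFree A := by
  obtain ⟨m, rfl⟩ : ∃ m, p = m + 3 := ⟨p - 3, by omega⟩
  intro a ha b hb c hc habc
  let x : Fin (m + 3) → G := Fin.cons a (Fin.cons c fun _ : Fin (m + 1) => b)
  have hmem : ∀ i, x i ∈ A := Fin.cases ha (Fin.cases hc fun _ => hb)
  have hsum : ∑ i, x i = 0 := by
    calc ∑ i, x i = (a + c) + (m + 1) • b := by simp [x, Fin.sum_cons, add_assoc]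
      _ = (m + 3) • b := by rw [habc]; module
      _ = 0 := hG b
  exact hA x hmem hsum 0 2

theorem stmt_18_general (p : ℕ) (hp3 : 3 ≤ p) (ε : ℝ) (hε : 0 < ε) :
    ∃ n₀ : ℕ, ∀ n : ℕ, n₀ ≤ n →
      ∀ A : Finset (Fin n → ZMod p),
        (∀ x : Fin p → Fin n → ZMod p, (∀ i, x i ∈ A) →
          ∑ i, x i = 0 → ∀ a b, x a = x b) →
        (A.card : ℝ) ≤ ε * (p ^ n : ℝ) := by
  have : NeZero p := ⟨by omega⟩
  refine ⟨cornersTheoremBound ε, fun n hn A hA => ?_⟩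
  by_contra! hcard
  have hcardG : Fintype.card (Fin n → ZMod p) = p ^ n := by simp
  have hbound : cornersTheoremBound ε ≤ Fintype.card (Fin n → ZMod p) :=
    hcardG ▸ hn.trans (Nat.lt_pow_self (by omega)).le
  have hdense : ε * Fintype.card (Fin n → ZMod p) ≤ #A := by
    rw [hcardG]; push_cast; exact hcard.le
  refine roth_3ap_theorem ε hε hbound A hdense ?_
  exact threeAPFree_of_forall_sum_eq_zero hp3 (fun x => funext fun _ => by simp) hA

/-- For every prime `p ≥ 3` and `ε > 0`, for all sufficiently
large `n`: if `A ⊆ F_p^n` contains no `p` vectors (with repetition), not all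
equal, summing to zero, then `|A| ≤ ε·p^n`. -/
theorem stmt_18 (p : ℕ) (hp : p.Prime) (hp3 : 3 ≤ p) (ε : ℝ) (hε : 0 < ε) :
    ∃ n₀ : ℕ, ∀ n : ℕ, n₀ ≤ n →
      ∀ A : Finset (Fin n → ZMod p),
        (∀ x : Fin p → Fin n → ZMod p, (∀ i, x i ∈ A) →
          ∑ i, x i = 0 → ∀ a b, x a = x b) →
        (A.card : ℝ) ≤ ε * (p ^ n : ℝ) :=
  stmt_18_general p hp3 ε hε
end
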